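/- arXiv:2311.06587 — 10 statements merged into one kernel-verified Lean document; each statement's English description precedes it below -/
import Mathlib

section
/- For every real number b and every complex number s with Re(s) > 0, one has ∫₀¹ cos(b·log t) · t^{s/2 − 1} · (2t + (1−t)²/2)^{−s/2} dt = 2^{s/2 − 1} · Γ(s/2 + i b) · Γ(s/2 − i b) / Γ(s). -/
/-!
Since `2t + (1 - t)² / 2 = (1 + t)² / 2` and `2 cos (b log t) t^(s/2 - 1) = t^(u - 1) + t^(v - 1)`
with `u, v = s/2 ± ib`, the integrand equals
`2^(s/2 - 1) (t^(u - 1) + t^(v - 1)) (1 + t)^(-(u + v))`.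
The substitution `x = t / (1 + t)` turns `∫₀¹ t^(u - 1) (1 + t)^(-(u + v)) dt` into the Beta
integral `B(u, v)` taken over `(0, 1/2)`; after the reflection `x ↦ 1 - x`, the `v`-term is the
same integral over `(1/2, 1)`. Hence the integral is
`2^(s/2 - 1) B(u, v) = 2^(s/2 - 1) Γ(u) Γ(v) / Γ(s)`.
-/

open MeasureTheory Complex Set

namespace Complex

lemma intervalIntegrable_cpow_mul_one_add_cpow {u : ℂ} (hu : 0 < u.re) (w : ℂ) :
    IntervalIntegrable (fun t : ℝ => (t : ℂ) ^ (u - 1) * (1 + (t : ℂ)) ^ w) volume 0 1 := by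
  refine (intervalIntegral.intervalIntegrable_cpow' (by simpa using hu)).mul_continuousOn ?_
  refine continuousOn_of_forall_continuousAt fun t ht => ?_
  rw [uIcc_of_le zero_le_one] at ht
  refine ContinuousAt.cpow (by fun_prop) continuousAt_const ?_
  exact_mod_cast ofReal_mem_slitPlane.2 (by linarith [ht.1] : (0 : ℝ) < 1 + t)

lemma betaIntegrand_comp_div_one_add {t : ℝ} (ht : 0 < t) (u v : ℂ) :
    (((1 + t) ^ 2)⁻¹ : ℝ) • (((t / (1 + t) : ℝ) : ℂ) ^ (u - 1) *
      (1 - ((t / (1 + t) : ℝ) : ℂ)) ^ (v - 1)) =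
      (t : ℂ) ^ (u - 1) * (1 + (t : ℂ)) ^ (-(u + v)) := by
  have h1t : (0 : ℝ) < 1 + t := by linarith
  have hne : ((1 + t : ℝ) : ℂ) ≠ 0 := by exact_mod_cast h1t.ne'
  have hsub : 1 - ((t / (1 + t) : ℝ) : ℂ) = ((1 / (1 + t) : ℝ) : ℂ) := by
    rw [← ofReal_one, ← ofReal_sub]; congr 1; field_simp; ring
  have hexp : ((1 + t : ℝ) : ℂ) ^ (u + v) =
      ((1 + t : ℝ) : ℂ) ^ 2 * ((1 + t : ℝ) : ℂ) ^ (u - 1) *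
        ((1 + t : ℝ) : ℂ) ^ (v - 1) := by
    rw [← cpow_natCast, ← cpow_add _ _ hne, ← cpow_add _ _ hne]
    push_cast; ring_nf
  rw [hsub, ofReal_div, ofReal_div, div_cpow_ofReal_nonneg ht.le h1t.le,
    div_cpow_ofReal_nonneg zero_le_one h1t.le, ofReal_one, one_cpow, cpow_neg,
    real_smul, ← ofReal_one, ← ofReal_add, hexp]
  push_cast
  field_simp

lemma image_div_one_add_Ioo : (fun t : ℝ => t / (1 + t)) '' Ioo 0 1 = Ioo 0 (1 / 2) := by
  ext x
  constructor
  · rintro ⟨t, ⟨ht0, ht1⟩, rfl⟩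
    refine ⟨by positivity, ?_⟩
    rw [div_lt_iff₀ (by linarith)]
    linarith
  · rintro ⟨hx0, hx1⟩
    refine ⟨x / (1 - x), ⟨div_pos hx0 (by linarith), ?_⟩, ?_⟩
    · rw [div_lt_one (by linarith)]; linarith
    · have : 1 - x ≠ 0 := by linarith
      field_simp
      ring

lemma setIntegral_Ioo_zero_half_betaIntegrand (u v : ℂ) :
    ∫ x in Ioo (0 : ℝ) (1 / 2), (x : ℂ) ^ (u - 1) * (1 - (x : ℂ)) ^ (v - 1) =
      ∫ t in Ioo (0 : ℝ) 1, (t : ℂ) ^ (u - 1) * (1 + (t : ℂ)) ^ (-(u + v)) := by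
  have hderiv : ∀ t ∈ Ioo (0 : ℝ) 1,
      HasDerivWithinAt (fun t : ℝ => t / (1 + t)) ((1 + t) ^ 2)⁻¹ (Ioo 0 1) t := by
    intro t ht
    have h1t : 1 + t ≠ 0 := by linarith [ht.1]
    have h := (hasDerivAt_id' t).div ((hasDerivAt_id' t).const_add 1) h1t
    refine (h.congr_deriv ?_).hasDerivWithinAt
    field_simp
    ring
  have hinj : InjOn (fun t : ℝ => t / (1 + t)) (Ioo 0 1) := by
    intro t ht r hr htr
    have h1t : 1 + t ≠ 0 := by linarith [ht.1]
    have h1r : 1 + r ≠ 0 := by linarith [hr.1]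
    field_simp at htr
    linarith
  rw [← image_div_one_add_Ioo,
    integral_image_eq_integral_abs_deriv_smul measurableSet_Ioo hderiv hinj]
  refine setIntegral_congr_fun measurableSet_Ioo fun t ht => ?_
  have h1t : 0 < 1 + t := by linarith [ht.1]
  rw [abs_of_pos (by positivity)]
  exact betaIntegrand_comp_div_one_add ht.1 u v

lemma integral_half_one_betaIntegrand (u v : ℂ) :
    ∫ x in (1 / 2 : ℝ)..1, (x : ℂ) ^ (u - 1) * (1 - (x : ℂ)) ^ (v - 1) =
      ∫ x in (0 : ℝ)..(1 / 2), (x : ℂ) ^ (v - 1) * (1 - (x : ℂ)) ^ (u - 1) := by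
  have h := intervalIntegral.integral_comp_sub_left
    (fun x : ℝ => (x : ℂ) ^ (u - 1) * (1 - (x : ℂ)) ^ (v - 1)) (a := 0) (b := 1 / 2) 1
  norm_num at h
  rw [← h]
  congr 1 with x
  exact mul_comm _ _

theorem betaIntegral_eq_setIntegral_Ioo {u v : ℂ} (hu : 0 < u.re) (hv : 0 < v.re) :
    betaIntegral u v = ∫ t in Ioo (0 : ℝ) 1,
      ((t : ℂ) ^ (u - 1) + (t : ℂ) ^ (v - 1)) * (1 + (t : ℂ)) ^ (-(u + v)) := by
  have hIoo (f : ℝ → ℂ) :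
      ∫ x in (0 : ℝ)..(1 / 2), f x = ∫ x in Ioo (0 : ℝ) (1 / 2), f x := by
    rw [intervalIntegral.integral_of_le (by norm_num), integral_Ioc_eq_integral_Ioo]
  have hsplit := intervalIntegral.integral_add_adjacent_intervals
    (betaIntegral_convergent_left hu v)
    ((betaIntegral_convergent hu hv).mono_set (by
      rw [uIcc_of_le (by norm_num : (1 / 2 : ℝ) ≤ 1), uIcc_of_le zero_le_one]
      exact Icc_subset_Icc_left (by norm_num)))
  have hint (w : ℂ) (hw : 0 < w.re) : IntegrableOn
      (fun t : ℝ => (t : ℂ) ^ (w - 1) * (1 + (t : ℂ)) ^ (-(u + v))) (Ioo 0 1) :=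
    (intervalIntegrable_cpow_mul_one_add_cpow hw _).1.mono_set Ioo_subset_Ioc_self
  rw [betaIntegral, ← hsplit, integral_half_one_betaIntegrand, hIoo, hIoo,
    setIntegral_Ioo_zero_half_betaIntegrand, setIntegral_Ioo_zero_half_betaIntegrand,
    add_comm v u, ← integral_add (hint u hu) (hint v hv)]
  simp_rw [add_mul]

lemma two_mul_cos_mul_log_mul_cpow {t : ℝ} (ht : 0 < t) (b : ℝ) (w : ℂ) :
    2 * (Real.cos (b * Real.log t) : ℂ) * (t : ℂ) ^ w =
      (t : ℂ) ^ (w + I * b) + (t : ℂ) ^ (w - I * b) := by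
  have ht' : (t : ℂ) ≠ 0 := ofReal_ne_zero.2 ht.ne'
  have hIb : (t : ℂ) ^ (I * b) = exp ((b * Real.log t : ℝ) * I) := by
    rw [cpow_def_of_ne_zero ht', ← ofReal_log ht.le]; push_cast; ring_nf
  rw [cpow_add _ _ ht', cpow_sub _ _ ht', hIb, ofReal_cos, two_cos, neg_mul, exp_neg]
  ring

lemma cpow_two_mul_add_one_sub_sq_div_two {t : ℝ} (ht : 0 ≤ t) (s : ℂ) :
    ((2 * t + (1 - t) ^ 2 / 2 : ℝ) : ℂ) ^ (-(s / 2)) =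
      2 ^ (s / 2) * (1 + (t : ℂ)) ^ (-s) := by
  have h1t : 0 ≤ 1 + t := by linarith
  have hsq : 2 * t + (1 - t) ^ 2 / 2 = (1 + t) * (1 + t) / 2 := by ring
  have hne : ((1 + t : ℝ) : ℂ) ≠ 0 := by exact_mod_cast (by linarith : (0 : ℝ) < 1 + t).ne'
  have hexp : -(s / 2) + -(s / 2) = -s := by ring
  rw [hsq, ofReal_div, div_cpow_ofReal_nonneg (by positivity) zero_le_two, ofReal_mul,
    mul_cpow_ofReal_nonneg h1t h1t, ← cpow_add _ _ hne, hexp, ofReal_ofNat, cpow_neg 2,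
    div_inv_eq_mul]
  push_cast
  ring

end Complex

lemma picard_integrand_eq {t : ℝ} (ht : 0 < t) (b : ℝ) (s : ℂ) :
    (Real.cos (b * Real.log t) : ℂ) * (t : ℂ) ^ (s / 2 - 1) *
        ((2 * t + (1 - t) ^ 2 / 2 : ℝ) : ℂ) ^ (-(s / 2)) =
      2 ^ (s / 2 - 1) * (((t : ℂ) ^ (s / 2 + I * b - 1) + (t : ℂ) ^ (s / 2 - I * b - 1)) *
        (1 + (t : ℂ)) ^ (-(s / 2 + I * b + (s / 2 - I * b)))) := by
  have h2 : (2 : ℂ) ^ (s / 2) = 2 * 2 ^ (s / 2 - 1) := by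
    rw [cpow_sub _ _ two_ne_zero, cpow_one, mul_div_cancel₀ _ two_ne_zero]
  rw [cpow_two_mul_add_one_sub_sq_div_two ht.le,
    show s / 2 + I * b + (s / 2 - I * b) = s by ring,
    show s / 2 + I * b - 1 = s / 2 - 1 + I * b by ring,
    show s / 2 - I * b - 1 = s / 2 - 1 - I * b by ring, ← two_mul_cos_mul_log_mul_cpow ht, h2]
  ring

/-- Picard-type integral evaluation: for `b : ℝ` and `s : ℂ` with `Re s > 0`,
`∫₀¹ cos(b log t) t^{s/2-1} (2t + (1-t)²/2)^{-s/2} dt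
  = 2^{s/2-1} Γ(s/2+ib) Γ(s/2-ib) / Γ(s)`. -/
theorem picard_F_b_two_eval (b : ℝ) (s : ℂ) (hs : 0 < s.re) :
    ∫ t in Set.Ioo (0:ℝ) 1,
      (Real.cos (b * Real.log t) : ℂ) * (t : ℂ) ^ (s / 2 - 1) *
        ((2 * t + (1 - t) ^ 2 / 2 : ℝ) : ℂ) ^ (-(s / 2)) =
      (2 : ℂ) ^ (s / 2 - 1) * Complex.Gamma (s / 2 + I * b) *
        Complex.Gamma (s / 2 - I * b) / Complex.Gamma s := by
  have hu : 0 < (s / 2 + I * b).re := by simpa using half_pos hs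
  have hv : 0 < (s / 2 - I * b).re := by simpa using half_pos hs
  rw [setIntegral_congr_fun measurableSet_Ioo fun t ht => picard_integrand_eq ht.1 b s,
    integral_const_mul, ← betaIntegral_eq_setIntegral_Ioo hu hv,
    eq_div_iff (Gamma_ne_zero_of_re_pos hs), mul_assoc, mul_assoc,
    Gamma_mul_Gamma_eq_betaIntegral hu hv, show s / 2 + I * b + (s / 2 - I * b) = s by ring]
  ring
end

section
/- Fix a real number b and a real number σ > 0. Then, as t → +∞, the quantity (1 + t)^{1/2} · | 2^{(σ+it)/2 − 1} · Γ((σ+it)/2 + i b) · Γ((σ+it)/2 − i b) / Γ(σ+it) | converges to the positive constant √(2π) · 2^{−σ/2}. In particular, |𝓕_{b,2}(σ+it)| is asymptotic to C·(1+|t|)^{−1/2} as |t| → ∞ for a positive constant C depending only on σ. -/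
/-!
By the duplication formula `Γ(z) Γ(z + 1/2) = 2^{1-2z} √π Γ(2z)`, with `z = s/2`,
`‖2^{z-1} Γ(z + ib) Γ(z - ib) / Γ(s)‖ =
  √π 2^{-σ/2} ‖Γ(z + ib) Γ(z - ib) / Γ(z)²‖ ‖Γ(z) / Γ(z + 1/2)‖`.
Both ratios are handled by Gauss's product: if `p + q = r + s` then
`Γ(p) Γ(q) / (Γ(r) Γ(s)) = ∏ⱼ (1 + (rs - pq) / ((p + j)(q + j)))`, and along a vertical line
`p + it` the factors tend to `1` under a summable bound independent of `t`, so the ratio tends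
to `1`. Taking `(p, q, r, s) = (z + ib, z - ib, z, z)` disposes of the first ratio;
`(z, z + 1, z + 1/2, z + 1/2)`, together with `Γ(z + 1) = z Γ(z)`, gives
`|z| ‖Γ(z) / Γ(z + 1/2)‖² → 1`, and `|z| ~ t / 2`.
-/

open Complex Filter Topology Finset
open scoped Nat

namespace Complex

lemma re_add_natCast_le_norm (p : ℂ) (j : ℕ) : p.re + j ≤ ‖p + j‖ := by
  simpa using re_le_norm (p + j)

section GaussProduct

variable {p q r s : ℂ}

lemma summable_inv_mul_add_natCast {a b : ℝ} (ha : 0 < a) (hb : 0 < b) :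
    Summable fun j : ℕ => ((a + j) * (b + j))⁻¹ := by
  set m := min a b
  have hm : 0 < m := lt_min ha hb
  refine ((Real.summable_one_div_nat_add_rpow m 2).mpr one_lt_two).of_nonneg_of_le
    (fun j => by positivity) fun j => ?_
  have hj : (0 : ℝ) ≤ j := j.cast_nonneg
  rw [abs_of_pos (by positivity), Real.rpow_two, one_div]
  exact inv_anti₀ (by positivity) (by nlinarith [min_le_left a b, min_le_right a b])

lemma norm_div_mul_add_natCast_le (hp : 0 < p.re) (hq : 0 < q.re) (K : ℂ) (j : ℕ) :
    ‖K / ((p + j) * (q + j))‖ ≤ ‖K‖ * ((p.re + j) * (q.re + j))⁻¹ := by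
  rw [norm_div, norm_mul, div_eq_mul_inv]
  gcongr <;> exact re_add_natCast_le_norm _ j

lemma multipliable_one_add_div_mul_add_natCast (hp : 0 < p.re) (hq : 0 < q.re) (K : ℂ) :
    Multipliable fun j : ℕ => 1 + K / ((p + j) * (q + j)) :=
  multipliable_one_add_of_summable <|
    ((summable_inv_mul_add_natCast hp hq).mul_left ‖K‖).of_nonneg_of_le
      (fun _ => norm_nonneg _) (norm_div_mul_add_natCast_le hp hq K)

lemma prod_range_div_eq_GammaSeq (h : p + q = r + s) {n : ℕ} (hn : n ≠ 0) :
    ∏ j ∈ range (n + 1), (r + j) * (s + j) / ((p + j) * (q + j)) =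
      GammaSeq p n * GammaSeq q n / (GammaSeq r n * GammaSeq s n) := by
  have hn' : (n : ℂ) ≠ 0 := Nat.cast_ne_zero.mpr hn
  have hpow : (n : ℂ) ^ p * (n : ℂ) ^ q = (n : ℂ) ^ r * (n : ℂ) ^ s := by
    rw [← cpow_add _ _ hn', ← cpow_add _ _ hn', h]
  have hN : (n : ℂ) ^ r * n ! * ((n : ℂ) ^ s * n !) ≠ 0 := by
    have := n.factorial_ne_zero
    simp [cpow_eq_zero_iff, hn', this]
  have hnum : (n : ℂ) ^ p * n ! * ((n : ℂ) ^ q * n !) =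
      (n : ℂ) ^ r * n ! * ((n : ℂ) ^ s * n !) := by
    linear_combination (n ! : ℂ) ^ 2 * hpow
  simp only [GammaSeq, prod_div_distrib, prod_mul_distrib]
  rw [div_mul_div_comm, div_mul_div_comm, hnum, div_div_div_cancel_left' _ _ hN]

lemma add_natCast_ne_zero (hp : 0 < p.re) (j : ℕ) : p + j ≠ 0 :=
  norm_pos_iff.mp <| (by positivity : 0 < p.re + j).trans_le (re_add_natCast_le_norm p j)

lemma tendsto_prod_range_div_Gamma (h : p + q = r + s) (hr : 0 < r.re) (hs : 0 < s.re) :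
    Tendsto (fun n : ℕ => ∏ j ∈ range (n + 1), (r + j) * (s + j) / ((p + j) * (q + j))) atTop
      (𝓝 (Gamma p * Gamma q / (Gamma r * Gamma s))) := by
  refine (((GammaSeq_tendsto_Gamma p).mul (GammaSeq_tendsto_Gamma q)).div
    ((GammaSeq_tendsto_Gamma r).mul (GammaSeq_tendsto_Gamma s))
    (mul_ne_zero (Gamma_ne_zero_of_re_pos hr) (Gamma_ne_zero_of_re_pos hs))).congr' ?_
  filter_upwards [eventually_ne_atTop 0] with n hn
  exact (prod_range_div_eq_GammaSeq h hn).symm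

lemma one_add_div_mul_add_natCast (h : p + q = r + s) (hp : 0 < p.re) (hq : 0 < q.re) (j : ℕ) :
    1 + (r * s - p * q) / ((p + j) * (q + j)) = (r + j) * (s + j) / ((p + j) * (q + j)) := by
  have := add_natCast_ne_zero hp j
  have := add_natCast_ne_zero hq j
  field_simp
  linear_combination (j : ℂ) * h

theorem Gamma_mul_Gamma_div_eq_tprod (h : p + q = r + s)
    (hp : 0 < p.re) (hq : 0 < q.re) (hr : 0 < r.re) (hs : 0 < s.re) :
    Gamma p * Gamma q / (Gamma r * Gamma s) =
      ∏' j : ℕ, (1 + (r * s - p * q) / ((p + j) * (q + j))) := by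
  refine tendsto_nhds_unique (tendsto_prod_range_div_Gamma h hr hs) ?_
  simp_rw [← one_add_div_mul_add_natCast h hp hq]
  exact (multipliable_one_add_div_mul_add_natCast hp hq _).tendsto_prod_tprod_nat.comp
    (tendsto_add_atTop_nat 1)

end GaussProduct

lemma tendsto_inv_add_mul_I (a : ℂ) :
    Tendsto (fun t : ℝ => (a + t * I)⁻¹) atTop (𝓝 0) := by
  refine tendsto_inv₀_cobounded.comp (tendsto_norm_atTop_iff_cobounded.mp ?_)
  refine tendsto_atTop_mono (fun t => ?_) (tendsto_atTop_add_const_left _ a.im tendsto_id)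
  simpa using im_le_norm (a + t * I)

theorem tendsto_Gamma_mul_Gamma_div_Gamma_mul_Gamma_add_mul_I {p q r s : ℂ} (h : p + q = r + s)
    (hp : 0 < p.re) (hq : 0 < q.re) (hr : 0 < r.re) (hs : 0 < s.re) :
    Tendsto (fun t : ℝ => Gamma (p + t * I) * Gamma (q + t * I) /
      (Gamma (r + t * I) * Gamma (s + t * I))) atTop (𝓝 1) := by
  set K := r * s - p * q
  have hprod (t : ℝ) : Gamma (p + t * I) * Gamma (q + t * I) /
      (Gamma (r + t * I) * Gamma (s + t * I)) =
        ∏' j : ℕ, (1 + K / ((p + t * I + j) * (q + t * I + j))) := by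
    rw [Gamma_mul_Gamma_div_eq_tprod (by linear_combination h) (by simpa) (by simpa) (by simpa)
      (by simpa)]
    congr! 4
    linear_combination (-(t * I)) * h
  simp_rw [hprod]
  have hlim (j : ℕ) :
      Tendsto (fun t : ℝ => K / ((p + t * I + j) * (q + t * I + j))) atTop (𝓝 0) := by
    simpa [div_eq_mul_inv, mul_inv, add_right_comm _ _ (j : ℂ)] using
      ((tendsto_inv_add_mul_I (q + j)).mul (tendsto_inv_add_mul_I (p + j))).const_mul K
  simpa using tendsto_tprod_one_add_of_dominated_convergence
    ((summable_inv_mul_add_natCast hp hq).mul_left ‖K‖) hlim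
    (Eventually.of_forall fun t j => by
      simpa using norm_div_mul_add_natCast_le (p := p + t * I) (q := q + t * I) (by simpa)
        (by simpa) K j)

lemma tendsto_norm_add_mul_I_div_self (a : ℂ) :
    Tendsto (fun t : ℝ => ‖a + t * I‖ / t) atTop (𝓝 1) := by
  rw [tendsto_iff_norm_sub_tendsto_zero]
  refine squeeze_zero' (Eventually.of_forall fun _ => norm_nonneg _) ?_
    ((tendsto_const_nhds (x := ‖a‖)).div_atTop tendsto_id)
  filter_upwards [eventually_gt_atTop 0] with t ht
  have : |‖a + t * I‖ - t| ≤ ‖a‖ := by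
    simpa [abs_of_pos ht] using abs_norm_sub_norm_le (a + t * I) (t * I)
  rw [Real.norm_eq_abs, div_sub_one ht.ne', abs_div, abs_of_pos ht]
  exact div_le_div_of_nonneg_right this ht.le

theorem tendsto_sqrt_mul_norm_Gamma_div_Gamma_add_half {a : ℂ} (ha : 0 < a.re) :
    Tendsto (fun t : ℝ => √t * ‖Gamma (a + t * I) / Gamma (a + t * I + 1 / 2)‖)
      atTop (𝓝 1) := by
  have hratio := tendsto_Gamma_mul_Gamma_div_Gamma_mul_Gamma_add_mul_I (p := a) (q := a + 1)
    (r := a + 1 / 2) (s := a + 1 / 2) (by ring) ha (by simp; linarith) (by simp; linarith)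
    (by simp; linarith)
  have hsq : Tendsto (fun t : ℝ => t * ‖Gamma (a + t * I) / Gamma (a + t * I + 1 / 2)‖ ^ 2)
      atTop (𝓝 1) := by
    have := ((tendsto_norm_add_mul_I_div_self a).inv₀ one_ne_zero).mul hratio.norm
    rw [inv_one, norm_one, one_mul] at this
    refine this.congr' ?_
    filter_upwards [eventually_gt_atTop 0] with t ht
    have hw : a + t * I ≠ 0 := ne_zero_of_re_pos (by simpa)
    rw [add_right_comm a 1, add_right_comm a (1 / 2), Gamma_add_one _ hw]
    simp only [norm_div, norm_mul]
    field_simp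
  have := hsq.sqrt
  rw [Real.sqrt_one] at this
  exact this.congr' <| (eventually_ge_atTop 0).mono fun t ht => by
    rw [Real.sqrt_mul ht, Real.sqrt_sq (norm_nonneg _)]

lemma norm_two_cpow_mul_Gamma_mul_Gamma_div_Gamma {s : ℂ} (hs : 0 < s.re) (c : ℂ) :
    ‖(2 : ℂ) ^ (s / 2 - 1) * Gamma (s / 2 + c) * Gamma (s / 2 - c) / Gamma s‖ =
      √Real.pi * 2 ^ (-s.re / 2) *
        ‖Gamma (s / 2 + c) * Gamma (s / 2 - c) / (Gamma (s / 2) * Gamma (s / 2))‖ *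
          ‖Gamma (s / 2) / Gamma (s / 2 + 1 / 2)‖ := by
  have hΓ : Gamma (s / 2) ≠ 0 := Gamma_ne_zero_of_re_pos (by simpa)
  have hΓ' : Gamma (s / 2 + 1 / 2) ≠ 0 := Gamma_ne_zero_of_re_pos (by simp; positivity)
  have hpow : (2 : ℂ) ^ (1 - s) ≠ 0 := by simp [cpow_eq_zero_iff]
  have hπ : (√Real.pi : ℂ) ≠ 0 := ofReal_ne_zero.mpr (Real.sqrt_ne_zero'.mpr Real.pi_pos)
  have hdup := Gamma_mul_Gamma_add_half (s / 2)
  rw [mul_div_cancel₀ _ two_ne_zero] at hdup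
  have hΓs : Gamma s = Gamma (s / 2) * Gamma (s / 2 + 1 / 2) / (2 ^ (1 - s) * √Real.pi) := by
    rw [hdup]; field_simp
  have hexp : (2 : ℂ) ^ (-s / 2) = 2 ^ (s / 2 - 1) * 2 ^ (1 - s) := by
    rw [← cpow_add _ _ two_ne_zero]; ring_nf
  have key : (2 : ℂ) ^ (s / 2 - 1) * Gamma (s / 2 + c) * Gamma (s / 2 - c) / Gamma s =
      √Real.pi * 2 ^ (-s / 2) *
        (Gamma (s / 2 + c) * Gamma (s / 2 - c) / (Gamma (s / 2) * Gamma (s / 2))) *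
          (Gamma (s / 2) / Gamma (s / 2 + 1 / 2)) := by
    rw [hΓs, hexp]; field_simp
  have hnorm : ‖(2 : ℂ) ^ (-s / 2)‖ = 2 ^ (-s.re / 2) := by
    simpa using norm_cpow_eq_rpow_re_of_pos two_pos (-s / 2)
  rw [key, norm_mul, norm_mul, norm_mul, hnorm, norm_real, Real.norm_of_nonneg (Real.sqrt_nonneg _)]

lemma add_mul_I_div_two (a : ℂ) (t : ℝ) : (a + t * I) / 2 = a / 2 + (t / 2 : ℝ) * I := by
  push_cast; ring

theorem tendsto_Gamma_half_add_mul_Gamma_half_sub_div {a c : ℂ}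
    (hadd : 0 < (a / 2 + c).re) (hsub : 0 < (a / 2 - c).re) :
    Tendsto (fun t : ℝ => Gamma ((a + t * I) / 2 + c) * Gamma ((a + t * I) / 2 - c) /
      (Gamma ((a + t * I) / 2) * Gamma ((a + t * I) / 2))) atTop (𝓝 1) := by
  have hre : 0 < (a / 2).re := by
    have := add_pos hadd hsub
    simp only [add_re, sub_re] at this ⊢
    linarith
  refine ((tendsto_Gamma_mul_Gamma_div_Gamma_mul_Gamma_add_mul_I (by ring) hadd hsub hre
    hre).comp (tendsto_id.atTop_div_const two_pos)).congr fun t => ?_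
  simp only [Function.comp_apply, id, add_mul_I_div_two]
  ring_nf

theorem tendsto_sqrt_one_add_mul_norm_Gamma_half_div {a : ℂ} (ha : 0 < a.re) :
    Tendsto (fun t : ℝ => √(1 + t) *
      ‖Gamma ((a + t * I) / 2) / Gamma ((a + t * I) / 2 + 1 / 2)‖) atTop (𝓝 √2) := by
  have hhalf := (tendsto_sqrt_mul_norm_Gamma_div_Gamma_add_half (a := a / 2) (by simpa)).comp
    (tendsto_id.atTop_div_const two_pos)
  have hratio : Tendsto (fun t : ℝ => 2 / t + 2) atTop (𝓝 2) := by
    simpa using ((tendsto_const_nhds (x := (2 : ℝ))).div_atTop tendsto_id).add_const 2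
  have := hratio.sqrt.mul hhalf
  rw [mul_one] at this
  refine this.congr' <| (eventually_gt_atTop 0).mono fun t ht => ?_
  have : 2 / t + 2 = (1 + t) / (t / 2) := by field_simp
  simp only [Function.comp_apply, id, add_mul_I_div_two, this]
  rw [← mul_assoc, ← Real.sqrt_mul (by positivity), div_mul_cancel₀ _ (by positivity)]

end Complex

/-- Asymptotics of `𝓕_{b,2}(σ+it)` as `t → ∞`: the quantity
`(1+t)^{1/2} |2^{(σ+it)/2-1} Γ((σ+it)/2+ib) Γ((σ+it)/2-ib) / Γ(σ+it)|`
tends to `√(2π)·2^{-σ/2}`. -/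
theorem picard_F_b_two_asymptotic (b : ℝ) (σ : ℝ) (hσ : 0 < σ) :
    Tendsto (fun t : ℝ =>
      (1 + t) ^ ((1:ℝ)/2) *
        ‖((2 : ℂ) ^ (((σ : ℂ) + t * I) / 2 - 1) *
          Complex.Gamma (((σ : ℂ) + t * I) / 2 + I * b) *
          Complex.Gamma (((σ : ℂ) + t * I) / 2 - I * b) /
          Complex.Gamma ((σ : ℂ) + t * I))‖)
      atTop (nhds (Real.sqrt (2 * Real.pi) * (2 : ℝ) ^ (-σ / 2))) := by
  have hσ' : 0 < (σ : ℂ).re := by simpa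
  have hA := (tendsto_Gamma_half_add_mul_Gamma_half_sub_div (a := σ) (c := I * b) (by simpa)
    (by simpa)).norm
  have hB := tendsto_sqrt_one_add_mul_norm_Gamma_half_div hσ'
  rw [norm_one] at hA
  convert ((hA.const_mul (√Real.pi * 2 ^ (-σ / 2))).mul hB).congr fun t => ?_ using 2
  · rw [Real.sqrt_mul zero_le_two]; ring
  rw [norm_two_cpow_mul_Gamma_mul_Gamma_div_Gamma (by simpa) (I * b), ← Real.sqrt_eq_rpow]
  simp only [add_re, ofReal_re, mul_re, ofReal_im, I_re, I_im]
  ring_nf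
end

section
/- For every real number b ≥ 0 and every complex number s with 0 < Re(s) < 1, one has ∫₀¹ cos(b·log t) · t^{s/2 − 1} · ((1−t)²/2)^{−s/2} dt = (cosh(π b) / cos(π s/2)) · 2^{s/2 − 1} · Γ(s/2 + i b) · Γ(s/2 − i b) / Γ(s). -/
open MeasureTheory Complex

lemma picard_cpow_real {x : ℝ} (hx : 0 < x) (w : ℂ) :
    ((x : ℝ) : ℂ) ^ w = Complex.exp ((Real.log x : ℂ) * w) := by
  rw [Complex.cpow_def_of_ne_zero (by exact_mod_cast hx.ne'), Complex.ofReal_log hx.le]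

lemma picard_ptwise (b : ℝ) (s : ℂ) {t : ℝ} (ht : t ∈ Set.Ioo (0:ℝ) 1) :
    (Real.cos (b * Real.log t) : ℂ) * (t : ℂ) ^ (s / 2 - 1) *
      (((1 - t) ^ 2 / 2 : ℝ) : ℂ) ^ (-(s / 2)) =
    (2:ℂ) ^ (s/2-1) * ((t:ℂ) ^ (s/2 + I*b - 1) * (1 - (t:ℂ)) ^ ((1-s) - 1)
      + (t:ℂ) ^ (s/2 - I*b - 1) * (1 - (t:ℂ)) ^ ((1-s) - 1)) := by
  obtain ⟨ht0, ht1⟩ := ht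
  have h1t : (0:ℝ) < 1 - t := by linarith
  have hq : (0:ℝ) < (1 - t)^2/2 := by positivity
  have hcast : (1 - (t:ℂ)) = ((1 - t : ℝ) : ℂ) := by push_cast; ring
  have hlq : (Real.log ((1-t)^2/2) : ℂ) = 2 * (Real.log (1-t) : ℂ) - (Real.log 2 : ℂ) := by
    rw [Real.log_div (by positivity) (by norm_num), Real.log_pow]
    push_cast; ring
  have h2pow : (2:ℂ) ^ (s/2-1) = Complex.exp ((Real.log 2 : ℂ) * (s/2-1)) := by
    rw [show (2:ℂ) = ((2:ℝ):ℂ) by norm_num, picard_cpow_real (by norm_num : (0:ℝ) < 2)]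
  have h2exp : Complex.exp ((Real.log 2 : ℂ)) = 2 := by
    rw [← Complex.ofReal_exp, Real.exp_log (by norm_num)]; norm_num
  rw [picard_cpow_real ht0, hcast, picard_cpow_real h1t,
    picard_cpow_real ht0, picard_cpow_real ht0, picard_cpow_real hq, hlq, h2pow]
  rw [Complex.ofReal_cos, Complex.cos]
  have hb2 : ((b * Real.log t : ℝ) : ℂ) = (b:ℂ) * (Real.log t : ℂ) := by push_cast; ring
  rw [hb2]
  simp only [div_mul_eq_mul_div, add_mul, mul_add, ← Complex.exp_add]
  rw [div_eq_iff (two_ne_zero)]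
  have combine : ∀ x y : ℂ, (Complex.exp x + Complex.exp y) * 2
      = Complex.exp (x + (Real.log 2 : ℂ)) + Complex.exp (y + (Real.log 2 : ℂ)) := by
    intro x y; rw [Complex.exp_add, Complex.exp_add, h2exp]; ring
  rw [combine]
  congr 1 <;> · apply congrArg; ring
lemma picard_gamma_alg (b : ℝ) (s : ℂ) (hs0 : 0 < s.re) (hs1 : s.re < 1) :
    Complex.betaIntegral (s/2 + I*b) (1-s) + Complex.betaIntegral (s/2 - I*b) (1-s)
      = ((Real.cosh (Real.pi * b) : ℂ) / Complex.cos ((Real.pi : ℂ) * s / 2)) *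
        (Complex.Gamma (s/2 + I*b) * Complex.Gamma (s/2 - I*b) / Complex.Gamma s) := by
  set u : ℂ := s/2 + I*b with hu_def
  set u' : ℂ := s/2 - I*b with hu'_def
  have hu : 0 < u.re := by
    simp only [hu_def, Complex.add_re, Complex.div_re, Complex.mul_re, Complex.I_re,
      Complex.I_im, Complex.ofReal_re, Complex.ofReal_im]
    norm_num; linarith
  have hu' : 0 < u'.re := by
    simp only [hu'_def, Complex.sub_re, Complex.div_re, Complex.mul_re, Complex.I_re,
      Complex.I_im, Complex.ofReal_re, Complex.ofReal_im]
    norm_num; linarith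
  have hv : 0 < (1-s).re := by simp only [Complex.sub_re, Complex.one_re]; linarith
  have h1u : 0 < (1-u).re := by
    simp only [Complex.sub_re, Complex.one_re, hu_def, Complex.add_re, Complex.div_re,
      Complex.mul_re, Complex.I_re, Complex.I_im, Complex.ofReal_re, Complex.ofReal_im]
    norm_num; linarith
  have h1u' : 0 < (1-u').re := by
    simp only [Complex.sub_re, Complex.one_re, hu'_def, Complex.div_re,
      Complex.mul_re, Complex.I_re, Complex.I_im, Complex.ofReal_re, Complex.ofReal_im]
    norm_num; linarith
  -- Gamma nonvanishing
  have hGu : Complex.Gamma u ≠ 0 := Complex.Gamma_ne_zero_of_re_pos hu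
  have hGu' : Complex.Gamma u' ≠ 0 := Complex.Gamma_ne_zero_of_re_pos hu'
  have hGs : Complex.Gamma s ≠ 0 := Complex.Gamma_ne_zero_of_re_pos hs0
  have hGv : Complex.Gamma (1-s) ≠ 0 := Complex.Gamma_ne_zero_of_re_pos hv
  have hG1u : Complex.Gamma (1-u) ≠ 0 := Complex.Gamma_ne_zero_of_re_pos h1u
  have hG1u' : Complex.Gamma (1-u') ≠ 0 := Complex.Gamma_ne_zero_of_re_pos h1u'
  -- reflection formulas
  have hrefu := Complex.Gamma_mul_Gamma_one_sub u
  have hrefu' := Complex.Gamma_mul_Gamma_one_sub u'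
  have hrefs := Complex.Gamma_mul_Gamma_one_sub s
  -- sin nonvanishing
  have hsinu : Complex.sin ((Real.pi:ℂ) * u) ≠ 0 := by
    intro h; rw [h, div_zero] at hrefu; exact mul_ne_zero hGu hG1u hrefu
  have hsinu' : Complex.sin ((Real.pi:ℂ) * u') ≠ 0 := by
    intro h; rw [h, div_zero] at hrefu'; exact mul_ne_zero hGu' hG1u' hrefu'
  have hsins : Complex.sin ((Real.pi:ℂ) * s) ≠ 0 := by
    intro h; rw [h, div_zero] at hrefs; exact mul_ne_zero hGs hGv hrefs
  have hsin2 : Complex.sin ((Real.pi:ℂ) * s)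
      = 2 * Complex.sin ((Real.pi:ℂ) * s / 2) * Complex.cos ((Real.pi:ℂ) * s / 2) := by
    have := Complex.sin_two_mul ((Real.pi:ℂ) * s / 2)
    rwa [show 2 * ((Real.pi:ℂ) * s / 2) = (Real.pi:ℂ) * s by ring] at this
  have hcos : Complex.cos ((Real.pi:ℂ) * s / 2) ≠ 0 := by
    intro h; rw [hsin2, h, mul_zero] at hsins; exact hsins rfl
  have hpi : ((Real.pi : ℝ) : ℂ) ≠ 0 := by
    exact_mod_cast Real.pi_ne_zero
  -- cleared reflection identities
  have h3 : Complex.Gamma u' * Complex.Gamma (1-u') * Complex.sin ((Real.pi:ℂ) * u')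
      = (Real.pi:ℂ) := by rw [hrefu', div_mul_cancel₀ _ hsinu']
  have h4 : Complex.Gamma u * Complex.Gamma (1-u) * Complex.sin ((Real.pi:ℂ) * u)
      = (Real.pi:ℂ) := by rw [hrefu, div_mul_cancel₀ _ hsinu]
  have h5 : Complex.Gamma s * Complex.Gamma (1-s) * Complex.sin ((Real.pi:ℂ) * s)
      = (Real.pi:ℂ) := by rw [hrefs, div_mul_cancel₀ _ hsins]
  -- beta identities
  have h1 : Complex.Gamma u * Complex.Gamma (1-s)
      = Complex.Gamma (1-u') * Complex.betaIntegral u (1-s) := by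
    have := Complex.Gamma_mul_Gamma_eq_betaIntegral hu hv
    rwa [show u + (1-s) = 1 - u' by rw [hu_def, hu'_def]; ring] at this
  have h2 : Complex.Gamma u' * Complex.Gamma (1-s)
      = Complex.Gamma (1-u) * Complex.betaIntegral u' (1-s) := by
    have := Complex.Gamma_mul_Gamma_eq_betaIntegral hu' hv
    rwa [show u' + (1-s) = 1 - u by rw [hu_def, hu'_def]; ring] at this
  -- sine sum
  have hC : Complex.cos (((Real.pi * b : ℝ) : ℂ) * I) = ((Real.cosh (Real.pi * b) : ℝ) : ℂ) := by
    rw [Complex.cos_mul_I, Complex.ofReal_cosh]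
  have h7 : Complex.sin ((Real.pi:ℂ) * u) + Complex.sin ((Real.pi:ℂ) * u')
      = 2 * Complex.sin ((Real.pi:ℂ) * s / 2) * ((Real.cosh (Real.pi * b) : ℝ) : ℂ) := by
    rw [show (Real.pi:ℂ) * u = (Real.pi:ℂ) * s / 2 + ((Real.pi * b : ℝ):ℂ) * I by
        rw [hu_def]; push_cast; ring,
      show (Real.pi:ℂ) * u' = (Real.pi:ℂ) * s / 2 - ((Real.pi * b : ℝ):ℂ) * I by
        rw [hu'_def]; push_cast; ring,
      Complex.sin_add, Complex.sin_sub, ← hC]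
    ring
  -- final computation
  set B₁ := Complex.betaIntegral u (1-s)
  set B₂ := Complex.betaIntegral u' (1-s)
  have hB1 : (Real.pi:ℂ) * B₁
      = Complex.Gamma u * Complex.Gamma (1-s) * (Complex.sin ((Real.pi:ℂ) * u') * Complex.Gamma u') := by
    linear_combination (-B₁) * h3 - (Complex.sin ((Real.pi:ℂ) * u') * Complex.Gamma u') * h1
  have hB2 : (Real.pi:ℂ) * B₂
      = Complex.Gamma u' * Complex.Gamma (1-s) * (Complex.sin ((Real.pi:ℂ) * u) * Complex.Gamma u) := by
    linear_combination (-B₂) * h4 - (Complex.sin ((Real.pi:ℂ) * u) * Complex.Gamma u) * h2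
  have final' : (Real.pi:ℂ) * ((B₁ + B₂) * (Complex.cos ((Real.pi:ℂ) * s / 2) * Complex.Gamma s))
      = (Real.pi:ℂ) * (((Real.cosh (Real.pi * b) : ℝ):ℂ) * (Complex.Gamma u * Complex.Gamma u')) := by
    linear_combination (Complex.cos ((Real.pi:ℂ) * s / 2) * Complex.Gamma s) * hB1
      + (Complex.cos ((Real.pi:ℂ) * s / 2) * Complex.Gamma s) * hB2
      + (Complex.cos ((Real.pi:ℂ) * s / 2) * Complex.Gamma s * Complex.Gamma (1-s)
          * Complex.Gamma u * Complex.Gamma u') * h7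
      + (((Real.cosh (Real.pi * b) : ℝ):ℂ) * Complex.Gamma u * Complex.Gamma u') * h5
      - (((Real.cosh (Real.pi * b) : ℝ):ℂ) * Complex.Gamma u * Complex.Gamma u'
          * Complex.Gamma s * Complex.Gamma (1-s)) * hsin2
  have final := mul_left_cancel₀ hpi final'
  rw [div_mul_div_comm, eq_div_iff (mul_ne_zero hcos hGs)]
  linear_combination final

lemma picard_beta_Ioo (u v : ℂ) :
    Complex.betaIntegral u v
      = ∫ t in Set.Ioo (0:ℝ) 1, (t:ℂ) ^ (u - 1) * (1 - (t:ℂ)) ^ (v - 1) := by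
  rw [Complex.betaIntegral, intervalIntegral.integral_of_le zero_le_one,
    MeasureTheory.integral_Ioc_eq_integral_Ioo]

lemma picard_beta_integrable {u v : ℂ} (hu : 0 < u.re) (hv : 0 < v.re) :
    IntegrableOn (fun t : ℝ => (t:ℂ) ^ (u - 1) * (1 - (t:ℂ)) ^ (v - 1)) (Set.Ioo (0:ℝ) 1) := by
  have h := Complex.betaIntegral_convergent hu hv
  rw [intervalIntegrable_iff, Set.uIoc_of_le zero_le_one] at h
  exact h.mono_set Set.Ioo_subset_Ioc_self

/-- Evaluation of `𝓕_{b,0}(s)`: for `b ≥ 0` and `0 < Re s < 1`,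
`∫₀¹ cos(b log t) t^{s/2-1} ((1-t)²/2)^{-s/2} dt
  = (cosh(πb)/cos(πs/2)) · 2^{s/2-1} Γ(s/2+ib) Γ(s/2-ib)/Γ(s)`. -/
theorem picard_F_b_zero_eval (b : ℝ) (hb : 0 ≤ b) (s : ℂ)
    (hs0 : 0 < s.re) (hs1 : s.re < 1) :
    ∫ t in Set.Ioo (0:ℝ) 1,
      (Real.cos (b * Real.log t) : ℂ) * (t : ℂ) ^ (s / 2 - 1) *
        (((1 - t) ^ 2 / 2 : ℝ) : ℂ) ^ (-(s / 2)) =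
      ((Real.cosh (Real.pi * b) : ℂ) / Complex.cos ((Real.pi : ℂ) * s / 2)) *
        ((2 : ℂ) ^ (s / 2 - 1) * Complex.Gamma (s / 2 + I * b) *
          Complex.Gamma (s / 2 - I * b) / Complex.Gamma s) := by
  have hu : 0 < (s/2 + I*b).re := by
    simp only [Complex.add_re, Complex.div_re, Complex.mul_re, Complex.I_re, Complex.I_im,
      Complex.ofReal_re, Complex.ofReal_im]
    norm_num; linarith
  have hu' : 0 < (s/2 - I*b).re := by
    simp only [Complex.sub_re, Complex.div_re, Complex.mul_re, Complex.I_re, Complex.I_im,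
      Complex.ofReal_re, Complex.ofReal_im]
    norm_num; linarith
  have hv : 0 < (1-s).re := by simp only [Complex.sub_re, Complex.one_re]; linarith
  have hint : ∫ t in Set.Ioo (0:ℝ) 1,
      (Real.cos (b * Real.log t) : ℂ) * (t : ℂ) ^ (s / 2 - 1) *
        (((1 - t) ^ 2 / 2 : ℝ) : ℂ) ^ (-(s / 2))
      = (2:ℂ) ^ (s/2-1) * (Complex.betaIntegral (s/2 + I*b) (1-s)
          + Complex.betaIntegral (s/2 - I*b) (1-s)) := by
    rw [MeasureTheory.setIntegral_congr_fun measurableSet_Ioo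
        (fun t ht => picard_ptwise b s ht),
      MeasureTheory.integral_const_mul,
      MeasureTheory.integral_add (picard_beta_integrable hu hv) (picard_beta_integrable hu' hv),
      picard_beta_Ioo, picard_beta_Ioo]
  rw [hint, picard_gamma_alg b s hs0 hs1]
  ring
end

section
/- For every real number b ≥ 0, every real number a > 0, and every complex number s with Re(s) > 0, one has ∫₀¹ cos(b·log t) · t^{s/2 − 1} · (a·t + (1−t)²/2)^{−s/2} dt = ∫₀^∞ cos(b·u) · (a − 1 + cosh(u))^{−s/2} du. -/
open MeasureTheory Complex

/-! The substitution `t = exp (-u)` does it: `a t + (1 - t)² / 2 = t (a - 1 + cosh u)`, and since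
`t > 0` the principal power splits as `(t x) ^ w = t ^ w x ^ w` for every complex `x`, so the
Jacobian `t` and `t ^ (s/2 - 1)` cancel `t ^ (-s/2)`, while `cos (b log t) = cos (b u)`. -/

theorem Complex.ofReal_mul_cpow {r : ℝ} (hr : 0 ≤ r) (x w : ℂ) :
    ((r : ℂ) * x) ^ w = (r : ℂ) ^ w * x ^ w := by
  rcases eq_or_ne w 0 with rfl | hw
  · simp
  rcases hr.eq_or_lt with rfl | hr
  · simp [zero_cpow hw]
  rcases eq_or_ne x 0 with rfl | hx
  · simp [zero_cpow hw]
  have hr' : (r : ℂ) ≠ 0 := ofReal_ne_zero.mpr hr.ne'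
  rw [cpow_def_of_ne_zero (mul_ne_zero hr' hx), log_ofReal_mul hr hx, ofReal_log hr.le, add_mul,
    exp_add, ← cpow_def_of_ne_zero hr', ← cpow_def_of_ne_zero hx]

theorem Real.image_exp_neg_Ioi_zero :
    (fun u : ℝ => Real.exp (-u)) '' Set.Ioi 0 = Set.Ioo 0 1 := by
  rw [← Function.comp_def, Set.image_comp, Set.image_neg_Ioi, neg_zero, Real.image_exp_Iio,
    Real.exp_zero]

theorem integral_Ioo_zero_one_eq_integral_Ioi_exp_neg {E : Type*} [NormedAddCommGroup E]
    [NormedSpace ℝ E] (f : ℝ → E) :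
    ∫ t in Set.Ioo (0:ℝ) 1, f t =
      ∫ u in Set.Ioi (0:ℝ), Real.exp (-u) • f (Real.exp (-u)) := by
  have hderiv (u : ℝ) :
      HasDerivWithinAt (fun u => Real.exp (-u)) (-Real.exp (-u)) (Set.Ioi 0) u := by
    simpa using ((hasDerivAt_neg u).exp).hasDerivWithinAt
  have hinj : Set.InjOn (fun u : ℝ => Real.exp (-u)) (Set.Ioi 0) :=
    fun x _ y _ h => neg_injective (Real.exp_injective h)
  rw [← Real.image_exp_neg_Ioi_zero,
    integral_image_eq_integral_abs_deriv_smul measurableSet_Ioi (fun u _ => hderiv u) hinj]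
  simp only [abs_neg, abs_of_pos (Real.exp_pos _)]

theorem Real.mul_exp_neg_add_sq_div_two_eq_exp_neg_mul_cosh (a u : ℝ) :
    a * Real.exp (-u) + (1 - Real.exp (-u)) ^ 2 / 2 = Real.exp (-u) * (a - 1 + Real.cosh u) := by
  rw [Real.cosh_eq]
  have h : Real.exp (-u) * Real.exp u = 1 := by rw [← Real.exp_add, neg_add_cancel, Real.exp_zero]
  linear_combination (-1/2 : ℝ) * h

theorem Complex.ofReal_mul_cpow_sub_one_mul_mul_cpow_neg {t : ℝ} (ht : 0 < t) (x w : ℂ) :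
    (t : ℂ) * ((t : ℂ) ^ (w - 1) * ((t : ℂ) * x) ^ (-w)) = x ^ (-w) := by
  have ht' : (t : ℂ) ≠ 0 := ofReal_ne_zero.mpr ht.ne'
  have htw : (t : ℂ) ^ w ≠ 0 := cpow_ne_zero_iff.mpr (.inl ht')
  rw [ofReal_mul_cpow ht.le, cpow_sub _ _ ht', cpow_one, cpow_neg]
  field_simp

theorem picard_F_integral_repr_general (b : ℝ) (a : ℝ)
    (s : ℂ) :
    ∫ t in Set.Ioo (0:ℝ) 1,
      (Real.cos (b * Real.log t) : ℂ) * (t : ℂ) ^ (s / 2 - 1) *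
        ((a * t + (1 - t) ^ 2 / 2 : ℝ) : ℂ) ^ (-(s / 2)) =
      ∫ u in Set.Ioi (0:ℝ),
        (Real.cos (b * u) : ℂ) * ((a - 1 + Real.cosh u : ℝ) : ℂ) ^ (-(s / 2)) := by
  rw [integral_Ioo_zero_one_eq_integral_Ioi_exp_neg]
  congr 1 with u
  rw [Real.mul_exp_neg_add_sq_div_two_eq_exp_neg_mul_cosh, Real.log_exp, mul_neg, Real.cos_neg,
    real_smul, Complex.ofReal_mul, ← Complex.ofReal_mul_cpow_sub_one_mul_mul_cpow_neg
      (Real.exp_pos (-u)) (a - 1 + Real.cosh u : ℝ) (s / 2)]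
  ring

/-- Alternative integral representation of the Picard-type function `𝓕_{b,a}(s)`:
for `b ≥ 0`, `a > 0` and `Re s > 0`,
`∫₀¹ cos(b log t) t^{s/2-1} (at + (1-t)²/2)^{-s/2} dt
  = ∫₀^∞ cos(bu) (a-1+cosh u)^{-s/2} du`. -/
theorem picard_F_integral_repr (b : ℝ) (hb : 0 ≤ b) (a : ℝ) (ha : 0 < a)
    (s : ℂ) (hs : 0 < s.re) :
    ∫ t in Set.Ioo (0:ℝ) 1,
      (Real.cos (b * Real.log t) : ℂ) * (t : ℂ) ^ (s / 2 - 1) *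
        ((a * t + (1 - t) ^ 2 / 2 : ℝ) : ℂ) ^ (-(s / 2)) =
      ∫ u in Set.Ioi (0:ℝ),
        (Real.cos (b * u) : ℂ) * ((a - 1 + Real.cosh u : ℝ) : ℂ) ^ (-(s / 2)) :=
  picard_F_integral_repr_general b a s
end

section
/- For every real number b and every complex number s with Re(s) > 0, one has ∫₀^∞ cos(b·u) · (1 + cosh(u))^{−s/2} du = 2^{s/2 − 1} · Γ(s/2 + i b) · Γ(s/2 − i b) / Γ(s). -/
/-! Since `1 + cosh u = (1 + eᵘ)² / (2eᵘ)`, splitting `cos (bu)` into exponentials writes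
the integrand as `2^{s/2-1} (F(u) + F(-u))` with `F(u) = e^{pu} (1 + eᵘ)^{-s}` and `p = s/2 + ib`,
so the integral over `(0, ∞)` is `2^{s/2-1} ∫_ℝ F`. The substitution `x = eᵘ / (1 + eᵘ)` turns
`∫_ℝ F` into the Beta integral `B(s/2 + ib, s/2 - ib) = Γ(s/2 + ib) Γ(s/2 - ib) / Γ(s)`. -/

open MeasureTheory Complex

namespace Real
open Set

lemma log_one_add_exp_neg (u : ℝ) : log (1 + exp (-u)) = log (1 + exp u) - u := by
  have : 1 + exp (-u) = (1 + exp u) / exp u := by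
    rw [exp_neg]; field_simp; ring
  rw [this, log_div (by positivity) (exp_pos u).ne', log_exp]

lemma log_sigmoid (u : ℝ) : log (sigmoid u) = u - log (1 + exp u) := by
  rw [sigmoid_def, log_inv, log_one_add_exp_neg]; ring

lemma log_one_sub_sigmoid (u : ℝ) : log (1 - sigmoid u) = -log (1 + exp u) := by
  rw [← sigmoid_neg, sigmoid_def, log_inv, neg_neg]

lemma log_one_add_cosh (u : ℝ) : log (1 + cosh u) = 2 * log (1 + exp u) - u - log 2 := by
  have : 1 + cosh u = (1 + exp u) ^ 2 / (2 * exp u) := by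
    rw [cosh_eq, exp_neg]; field_simp; ring
  rw [this, log_div (by positivity) (by positivity), log_pow, log_mul two_ne_zero (exp_pos u).ne',
    log_exp]
  push_cast; ring

section SigmoidSubstitution

variable {E : Type*} [NormedAddCommGroup E] [NormedSpace ℝ E]

lemma image_univ_sigmoid : sigmoid '' univ = Ioo 0 1 := by
  rw [image_univ, range_sigmoid]

lemma integrableOn_Ioo_zero_one_iff_integrable_comp_sigmoid (g : ℝ → E) :
    IntegrableOn g (Ioo 0 1) ↔
      Integrable fun u => (sigmoid u * (1 - sigmoid u)) • g (sigmoid u) := by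
  rw [← image_univ_sigmoid, integrableOn_image_iff_integrableOn_abs_deriv_smul MeasurableSet.univ
    (fun u _ => (hasDerivAt_sigmoid u).hasDerivWithinAt) sigmoid_injective.injOn,
    integrableOn_univ]
  simp only [abs_of_pos (mul_pos (sigmoid_pos _) (sub_pos.2 (sigmoid_lt_one _)))]

lemma integral_Ioo_zero_one_eq_integral_comp_sigmoid (g : ℝ → E) :
    ∫ x in Ioo 0 1, g x = ∫ u, (sigmoid u * (1 - sigmoid u)) • g (sigmoid u) := by
  rw [← image_univ_sigmoid, integral_image_eq_integral_abs_deriv_smul MeasurableSet.univ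
    (fun u _ => (hasDerivAt_sigmoid u).hasDerivWithinAt) sigmoid_injective.injOn,
    Measure.restrict_univ]
  simp only [abs_of_pos (mul_pos (sigmoid_pos _) (sub_pos.2 (sigmoid_lt_one _)))]

end SigmoidSubstitution

end Real

open Real Set

lemma Complex.ofReal_cpow_eq_exp {x : ℝ} (hx : 0 < x) (w : ℂ) :
    (x : ℂ) ^ w = cexp (Real.log x * w) := by
  rw [cpow_def_of_ne_zero (ofReal_ne_zero.2 hx.ne'), ofReal_log hx.le]

noncomputable def expBetaIntegrand (p q : ℂ) (u : ℝ) : ℂ :=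
  cexp (p * u) * ((1 + rexp u : ℝ) : ℂ) ^ (-(p + q))

lemma sigmoid_smul_betaIntegrand (p q : ℂ) (u : ℝ) :
    (sigmoid u * (1 - sigmoid u)) •
        ((sigmoid u : ℂ) ^ (p - 1) * (1 - (sigmoid u : ℂ)) ^ (q - 1)) = expBetaIntegrand p q u := by
  have h0 := sigmoid_pos u
  have h1 : 0 < 1 - sigmoid u := sub_pos.2 (sigmoid_lt_one u)
  rw [expBetaIntegrand, ← ofReal_one, ← ofReal_sub, real_smul, ofReal_mul,
    ofReal_cpow_eq_exp h0, ofReal_cpow_eq_exp h1, ofReal_cpow_eq_exp (by positivity)]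
  nth_rw 1 [← Real.exp_log h0, ← Real.exp_log h1]
  rw [ofReal_exp, ofReal_exp, log_sigmoid, log_one_sub_sigmoid]
  simp only [← Complex.exp_add]
  congr 1
  push_cast
  ring

lemma integrable_expBetaIntegrand {p q : ℂ} (hp : 0 < p.re) (hq : 0 < q.re) :
    Integrable (expBetaIntegrand p q) := by
  simpa only [sigmoid_smul_betaIntegrand] using
    (integrableOn_Ioo_zero_one_iff_integrable_comp_sigmoid _).1
      ((betaIntegral_convergent hp hq).1.mono_set Ioo_subset_Ioc_self)

lemma integral_expBetaIntegrand (p q : ℂ) : ∫ u, expBetaIntegrand p q u = betaIntegral p q := by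
  rw [betaIntegral, intervalIntegral.integral_of_le zero_le_one, integral_Ioc_eq_integral_Ioo,
    integral_Ioo_zero_one_eq_integral_comp_sigmoid]
  simp only [sigmoid_smul_betaIntegrand]

lemma integral_Ioi_add_comp_neg {E : Type*} [NormedAddCommGroup E] [NormedSpace ℝ E]
    {f : ℝ → E} (hf : Integrable f) : ∫ x in Ioi 0, (f x + f (-x)) = ∫ x, f x := by
  rw [integral_add hf.integrableOn hf.comp_neg.integrableOn, integral_comp_neg_Ioi, neg_zero,
    add_comm, intervalIntegral.integral_Iic_add_Ioi hf.integrableOn hf.integrableOn]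

lemma cos_mul_one_add_cosh_cpow (b u : ℝ) (s : ℂ) :
    (Real.cos (b * u) : ℂ) * ((1 + Real.cosh u : ℝ) : ℂ) ^ (-(s / 2)) =
      (2 : ℂ) ^ (s / 2 - 1) * (expBetaIntegrand (s / 2 + I * b) (s / 2 - I * b) u +
        expBetaIntegrand (s / 2 + I * b) (s / 2 - I * b) (-u)) := by
  have h2 : (2 : ℂ) ^ (s / 2 - 1) = cexp (Real.log 2 * (s / 2 - 1)) := by
    exact_mod_cast ofReal_cpow_eq_exp two_pos (s / 2 - 1)
  have half : ∀ z : ℂ, cexp z / 2 = cexp (z - Real.log 2) := fun z => by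
    rw [Complex.exp_sub, ← ofReal_exp, Real.exp_log two_pos, ofReal_ofNat]
  rw [expBetaIntegrand, expBetaIntegrand, ofReal_cos, Complex.cos, h2,
    ofReal_cpow_eq_exp (by positivity), ofReal_cpow_eq_exp (by positivity),
    ofReal_cpow_eq_exp (by positivity), log_one_add_cosh, log_one_add_exp_neg, add_div, half, half,
    add_mul, mul_add]
  simp only [← Complex.exp_add]
  congr 1 <;> congr 1 <;> push_cast <;> ring

/-- Closed-form evaluation of `∫₀^∞ cos(bu)(1+cosh u)^{-s/2} du` for `Re s > 0`. -/
theorem cosh_integral_eval (b : ℝ) (s : ℂ) (hs : 0 < s.re) :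
    ∫ u in Set.Ioi (0:ℝ),
      (Real.cos (b * u) : ℂ) * ((1 + Real.cosh u : ℝ) : ℂ) ^ (-(s / 2)) =
      (2 : ℂ) ^ (s / 2 - 1) * Complex.Gamma (s / 2 + I * b) *
        Complex.Gamma (s / 2 - I * b) / Complex.Gamma s := by
  set p := s / 2 + I * b
  set q := s / 2 - I * b
  have hp : 0 < p.re := by simp [p]; linarith
  have hq : 0 < q.re := by simp [q]; linarith
  have hpq : p + q = s := by ring
  have hB : betaIntegral p q = Gamma p * Gamma q / Gamma s := by
    rw [eq_div_iff (Gamma_ne_zero_of_re_pos hs), Gamma_mul_Gamma_eq_betaIntegral hp hq, hpq,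
      mul_comm]
  rw [setIntegral_congr_fun measurableSet_Ioi fun u _ => cos_mul_one_add_cosh_cpow b u s,
    integral_const_mul, integral_Ioi_add_comp_neg (integrable_expBetaIntegrand hp hq),
    integral_expBetaIntegrand, hB]
  ring
end

section
/- For every real number r and every complex number w with −1/2 < Re(w) < 0, one has Γ(2w+1)·Γ(−w+ir)/Γ(w+ir+1) + Γ(2w+1)·Γ(−w−ir)/Γ(w−ir+1) = (cosh(π r)/cos(π w)) · Γ(−w+ir)·Γ(−w−ir)/Γ(−2w). Equivalently, in terms of the beta function B, one has B(−w+ir, 2w+1) + B(−w−ir, 2w+1) = (cosh(π r)/cos(π w)) · B(−w+ir, −w−ir). -/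
open Complex
open scoped Real

/-!
Writing `a = -w + ir`, `b = -w - ir`, `c = 2w + 1`, the three denominators are `Γ(1 - b)`, `Γ(1 - a)`
and `Γ(1 - c)`. The reflection formula turns each `1 / Γ(1 - z)` into `sin(πz) Γ(z) / π`, so both
sides become `Γ(a) Γ(b) Γ(c) / π` times a trigonometric factor, and the identity reduces to
`sin(πa) + sin(πb) = -2 sin(πw) cosh(πr) = (cosh(πr) / cos(πw)) sin(π(2w + 1))`.
-/

namespace Complex

theorem inv_Gamma_one_sub {z : ℂ} (hz : Gamma z ≠ 0) :
    (Gamma (1 - z))⁻¹ = sin (π * z) * Gamma z / π := by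
  rw [← mul_div_cancel_left₀ (Gamma (1 - z)) hz, Gamma_mul_Gamma_one_sub, inv_div,
    div_div_eq_mul_div, mul_comm]

theorem cos_pi_mul_ne_zero_of_abs_re_lt {w : ℂ} (hw : |w.re| < 1 / 2) : cos (π * w) ≠ 0 := by
  rw [cos_ne_zero_iff]
  intro k hk
  have hw_eq : w = k + 1 / 2 :=
    mul_left_cancel₀ (ofReal_ne_zero.2 Real.pi_ne_zero) (hk.trans (by ring))
  have hre : w.re = k + 1 / 2 := by simpa using congrArg re hw_eq
  rw [hre, abs_lt] at hw
  have hk_gt : (-1 : ℝ) < k := by linarith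
  have hk_lt : (k : ℝ) < 0 := by linarith
  norm_cast at hk_gt hk_lt
  omega

theorem sin_pi_mul_add_sin_pi_mul (w t : ℂ) :
    sin (π * (-w + I * t)) + sin (π * (-w - I * t)) = -2 * sin (π * w) * cosh (π * t) := by
  rw [sin_add_sin, ← cos_mul_I]
  ring_nf
  rw [sin_neg]
  ring

theorem sin_pi_mul_two_mul_add_one (w : ℂ) :
    sin (π * (2 * w + 1)) = -2 * sin (π * w) * cos (π * w) := by
  rw [show (π : ℂ) * (2 * w + 1) = 2 * (π * w) + π by ring, sin_add_pi, sin_two_mul]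
  ring

end Complex

/-- Gamma-factor identity: for `r : ℝ` and `-1/2 < Re w < 0`,
`Γ(2w+1)Γ(−w+ir)/Γ(w+ir+1) + Γ(2w+1)Γ(−w−ir)/Γ(w−ir+1)
  = (cosh(πr)/cos(πw)) Γ(−w+ir)Γ(−w−ir)/Γ(−2w)`. -/
theorem gamma_beta_identity (r : ℝ) (w : ℂ)
    (hw1 : -(1/2 : ℝ) < w.re) (hw2 : w.re < 0) :
    Complex.Gamma (2 * w + 1) * Complex.Gamma (-w + I * r) /
        Complex.Gamma (w + I * r + 1) +
      Complex.Gamma (2 * w + 1) * Complex.Gamma (-w - I * r) /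
        Complex.Gamma (w - I * r + 1) =
      ((Real.cosh (Real.pi * r) : ℂ) / Complex.cos ((Real.pi : ℂ) * w)) *
        (Complex.Gamma (-w + I * r) * Complex.Gamma (-w - I * r) /
          Complex.Gamma (-2 * w)) := by
  have ha : Gamma (-w + I * r) ≠ 0 := Gamma_ne_zero_of_re_pos (by simpa using hw2)
  have hb : Gamma (-w - I * r) ≠ 0 := Gamma_ne_zero_of_re_pos (by simpa using hw2)
  have hc : Gamma (2 * w + 1) ≠ 0 := Gamma_ne_zero_of_re_pos <| by
    simp only [add_re, mul_re, re_ofNat, im_ofNat, zero_mul, sub_zero, one_re]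
    linarith
  have hcos : cos (π * w) ≠ 0 :=
    cos_pi_mul_ne_zero_of_abs_re_lt (abs_lt.2 ⟨by linarith, by linarith⟩)
  rw [show w + I * r + 1 = 1 - (-w - I * r) by ring,
    show w - I * r + 1 = 1 - (-w + I * r) by ring, show -2 * w = 1 - (2 * w + 1) by ring]
  simp only [div_eq_mul_inv _ (Gamma (1 - _)), inv_Gamma_one_sub ha, inv_Gamma_one_sub hb,
    inv_Gamma_one_sub hc]
  have hsum := sin_pi_mul_add_sin_pi_mul w r
  rw [sin_pi_mul_two_mul_add_one, ofReal_cosh, ofReal_mul]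
  linear_combination
    (Gamma (2 * w + 1) * Gamma (-w + I * r) * Gamma (-w - I * r) / π) * hsum +
    (2 * cosh (π * r) * sin (π * w) * Gamma (2 * w + 1) * Gamma (-w + I * r) *
      Gamma (-w - I * r) / π) * mul_inv_cancel₀ hcos
end

section
/- For all complex numbers a, b and all real numbers x > 0 and y > 0, one has K_a(x) · K_b(y) = (1/2) ∫_{−∞}^{∞} K_{a−b}( (x² + y² + 2xy·cosh(u))^{1/2} ) · e^{−((a+b)/2)·u} · ((x e^u + y)/(y e^u + x))^{(a−b)/2} du, where for ν ∈ ℂ and z > 0 the K-Bessel function is given by K_ν(z) = (1/2) ∫_{−∞}^{∞} e^{−ν t − z·cosh(t)} dt. -/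
open MeasureTheory Complex

/-- The modified Bessel function of the second kind, for complex order `ν` and
real argument `z`, defined by `K_ν(z) = (1/2)∫_{-∞}^{∞} e^{-νt - z cosh t} dt`. -/
noncomputable def besselK (ν : ℂ) (z : ℝ) : ℂ :=
  (1/2) * ∫ t : ℝ, Complex.exp (-ν * (t : ℂ) - (z : ℂ) * (Real.cosh t : ℂ))

/-!
Up to the factor `1/4`, `K_a(x) K_b(y)` is the total integral of the convolution of the two
integrands `t ↦ e^{-at - x cosh t}` and `t ↦ e^{-bt - y cosh t}`. Centring the convolution
variable at `u/2` splits off `e^{-(a+b)u/2}` and leaves the exponent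
`-(a-b)v - (x cosh(v + u/2) + y cosh(v - u/2))`; the bracket equals `R cosh(v + θ)` with
`R = √(x² + y² + 2xy cosh u)` and `e^{2θ} = (x eᵘ + y)/(y eᵘ + x)`, so translating by `θ`
turns the convolution at `u` into `2 K_{a-b}(R) e^{-(a+b)u/2} e^{(a-b)θ}`.
-/

open scoped Convolution

namespace Real

lemma sq_div_four_le_cosh (t : ℝ) : t ^ 2 / 4 ≤ cosh t := by
  rw [← cosh_abs, cosh_eq]
  have h := quadratic_le_exp_of_nonneg (abs_nonneg t)
  rw [sq_abs] at h
  linarith [exp_pos (-|t|), abs_nonneg t]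

lemma mul_exp_add_mul_exp_neg {C D : ℝ} (hC : 0 < C) (hD : 0 < D) (v : ℝ) :
    C * exp v + D * exp (-v) = 2 * √(C * D) * cosh (v + log (C / D) / 2) := by
  have hexp : exp (log (C / D) / 2) = √(C / D) := by
    rw [exp_half, exp_log (by positivity)]
  have h₁ : √(C * D) * √(C / D) = C := by
    rw [← sqrt_mul (by positivity), show C * D * (C / D) = C ^ 2 by field_simp, sqrt_sq hC.le]
  have h₂ : √(C * D) * (√(C / D))⁻¹ = D := by
    rw [← sqrt_inv, ← sqrt_mul (by positivity), show C * D * (C / D)⁻¹ = D ^ 2 by field_simp,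
      sqrt_sq hD.le]
  rw [cosh_eq, neg_add, exp_add, exp_add, exp_neg (log (C / D) / 2), hexp]
  linear_combination (-exp v) * h₁ - exp (-v) * h₂

lemma mul_cosh_add_half_add_mul_cosh_sub_half {x y : ℝ} (hx : 0 < x) (hy : 0 < y) (u v : ℝ) :
    x * cosh (v + u / 2) + y * cosh (v - u / 2) =
      √(x ^ 2 + y ^ 2 + 2 * x * y * cosh u) *
        cosh (v + log ((x * exp u + y) / (y * exp u + x)) / 2) := by
  set e := exp (u / 2)
  have he : 0 < e := exp_pos _
  have hu : exp u = e ^ 2 := by rw [← exp_nat_mul]; ring_nf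
  have hu' : exp (-u) = (e ^ 2)⁻¹ := by rw [exp_neg, hu]
  set C := x * e + y * e⁻¹
  set D := x * e⁻¹ + y * e
  have hCD : C * D = x ^ 2 + y ^ 2 + 2 * x * y * cosh u := by
    simp only [C, D]
    rw [cosh_eq, hu', hu]
    field_simp
    ring
  have hC_div_D : C / D = (x * exp u + y) / (y * exp u + x) := by
    simp only [C, D]
    rw [hu]
    field_simp
    ring
  have hsum : x * cosh (v + u / 2) + y * cosh (v - u / 2) = (C * exp v + D * exp (-v)) / 2 := by
    simp only [cosh_eq, sub_eq_add_neg, neg_add, neg_neg, exp_add, exp_neg (u / 2), C, D]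
    ring
  rw [hsum, mul_exp_add_mul_exp_neg (by positivity) (by positivity), hCD, hC_div_D]
  ring

end Real

noncomputable def besselKIntegrand (ν : ℂ) (z t : ℝ) : ℂ :=
  cexp (-ν * t - z * Real.cosh t)

lemma besselK_eq_integral (ν : ℂ) (z : ℝ) :
    besselK ν z = 1 / 2 * ∫ t, besselKIntegrand ν z t :=
  rfl

lemma integrable_besselKIntegrand (ν : ℂ) {z : ℝ} (hz : 0 < z) :
    Integrable (besselKIntegrand ν z) := by
  refine (integrable_cexp_quadratic (b := z / 4) (by simpa using hz) (-ν) 0).mono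
    (by unfold besselKIntegrand; fun_prop) (ae_of_all _ fun t => ?_)
  simp only [besselKIntegrand, norm_exp, Real.exp_le_exp, ← ofReal_pow, sub_re, mul_re, neg_re,
    ofReal_re, ofReal_im, mul_zero, sub_zero, add_re, div_ofNat_re, add_zero]
  nlinarith [mul_le_mul_of_nonneg_left (Real.sq_div_four_le_cosh t) hz.le]

lemma integral_exp_neg_mul_sub_mul_cosh_add (ν : ℂ) (R θ : ℝ) :
    ∫ v : ℝ, cexp (-ν * v - R * Real.cosh (v + θ)) = 2 * cexp (ν * θ) * besselK ν R := by
  have h : ∀ v : ℝ, cexp (-ν * v - R * Real.cosh (v + θ)) =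
      cexp (ν * θ) * besselKIntegrand ν R (v + θ) := by
    intro v
    rw [besselKIntegrand, ← exp_add]
    congr 1
    push_cast
    ring
  simp_rw [h, integral_const_mul, integral_add_right_eq_self (besselKIntegrand ν R),
    besselK_eq_integral]
  ring

lemma besselKIntegrand_convolution (a b : ℂ) {x y : ℝ} (hx : 0 < x) (hy : 0 < y) (u : ℝ) :
    (besselKIntegrand a x ⋆[ContinuousLinearMap.mul ℂ ℂ] besselKIntegrand b y) u =
      2 * besselK (a - b) (√(x ^ 2 + y ^ 2 + 2 * x * y * Real.cosh u)) *
        cexp (-((a + b) / 2) * u) *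
        (((x * Real.exp u + y) / (y * Real.exp u + x) : ℝ) : ℂ) ^ ((a - b) / 2) := by
  set R := √(x ^ 2 + y ^ 2 + 2 * x * y * Real.cosh u)
  set r := (x * Real.exp u + y) / (y * Real.exp u + x)
  have hr : 0 < r := by positivity
  have hsplit : ∀ v : ℝ,
      besselKIntegrand a x (v + u / 2) * besselKIntegrand b y (u - (v + u / 2)) =
        cexp (-((a + b) / 2) * u) * cexp (-(a - b) * v - R * Real.cosh (v + Real.log r / 2)) := by
    intro v
    rw [besselKIntegrand, besselKIntegrand, ← exp_add, ← exp_add,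
      show u - (v + u / 2) = -(v - u / 2) by ring, Real.cosh_neg]
    congr 1
    have hcosh := congrArg (fun t : ℝ => (t : ℂ))
      (Real.mul_cosh_add_half_add_mul_cosh_sub_half hx hy u v)
    push_cast at hcosh ⊢
    linear_combination -hcosh
  have hpow : (r : ℂ) ^ ((a - b) / 2) = cexp ((a - b) * ((Real.log r / 2 : ℝ) : ℂ)) := by
    rw [cpow_def_of_ne_zero (ofReal_ne_zero.mpr hr.ne'), ← ofReal_log hr.le]
    push_cast
    ring_nf
  rw [convolution_def, ← integral_add_right_eq_self _ (u / 2)]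
  simp only [ContinuousLinearMap.mul_apply']
  rw [integral_congr_ae (ae_of_all _ hsplit), integral_const_mul,
    integral_exp_neg_mul_sub_mul_cosh_add, hpow]
  ring

/-- Product formula for two K-Bessel functions of different (complex) orders:
`K_a(x) K_b(y) = (1/2) ∫_{-∞}^{∞} K_{a-b}(√(x²+y²+2xy cosh u))
  e^{-((a+b)/2)u} ((x e^u + y)/(y e^u + x))^{(a-b)/2} du`. -/
theorem besselK_product_formula (a b : ℂ) (x y : ℝ) (hx : 0 < x) (hy : 0 < y) :
    besselK a x * besselK b y =
      (1/2) * ∫ u : ℝ,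
        besselK (a - b) (Real.sqrt (x ^ 2 + y ^ 2 + 2 * x * y * Real.cosh u)) *
          Complex.exp (-((a + b) / 2) * (u : ℂ)) *
          (((x * Real.exp u + y) / (y * Real.exp u + x) : ℝ) : ℂ) ^ ((a - b) / 2) := by
  calc besselK a x * besselK b y
      = 1 / 4 * ((∫ t, besselKIntegrand a x t) * ∫ t, besselKIntegrand b y t) := by
        simp only [besselK_eq_integral]
        ring
    _ = 1 / 4 * ∫ u,
          (besselKIntegrand a x ⋆[ContinuousLinearMap.mul ℂ ℂ] besselKIntegrand b y) u := by
        rw [integral_convolution _ (integrable_besselKIntegrand a hx)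
          (integrable_besselKIntegrand b hy)]
        rfl
    _ = _ := by
        simp_rw [besselKIntegrand_convolution a b hx hy, mul_assoc (2 : ℂ), integral_const_mul]
        ring
end

section
/- For all complex numbers a, b, all real numbers x > 0 and y > 0, and every real number T, one has ∫_{−∞}^{∞} e^{−(a−b)U − x·cosh(T+U) − y·cosh(T−U)} dU = ∫₀^{∞} ((x e^T + y e^{−T})/v)^{a−b} · exp( −(1/2)( v + (x² + y² + 2xy·cosh(2T))/v ) ) · dv/v. -/
open MeasureTheory Complex

/-!
Write `c = x e^T + y e^{-T}` and `d = y e^T + x e^{-T}`. Expanding the hyperbolic cosines gives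
`2 (x cosh (T + U) + y cosh (T - U)) = c e^U + d e^{-U}`, while `c d = x² + y² + 2xy cosh 2T`.
Hence the substitution `v = c e^U`, a bijection `ℝ → (0, ∞)` with `dv / v = dU`, carries the
right-hand integrand to the left-hand one, the power `(c / v)^(a - b) = e^{-(a - b) U}` being
the principal power of a positive real.
-/

theorem integral_comp_mul_exp {E : Type*} [NormedAddCommGroup E] [NormedSpace ℝ E]
    (g : ℝ → E) {c : ℝ} (hc : 0 < c) :
    ∫ u : ℝ, (c * Real.exp u) • g (c * Real.exp u) = ∫ v in Set.Ioi 0, g v := by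
  have himage : (fun u ↦ c * Real.exp u) '' Set.univ = Set.Ioi 0 := by
    rw [Set.image_univ, show (fun u ↦ c * Real.exp u) = (c * ·) ∘ Real.exp from rfl,
      Set.range_comp, Real.range_exp, Set.image_const_mul_Ioi_zero hc]
  have hderiv : ∀ u ∈ Set.univ,
      HasDerivWithinAt (fun u ↦ c * Real.exp u) (c * Real.exp u) Set.univ u :=
    fun u _ ↦ ((Real.hasDerivAt_exp u).const_mul c).hasDerivWithinAt
  have hinj : Set.InjOn (fun u ↦ c * Real.exp u) Set.univ :=
    fun u _ w _ h ↦ Real.exp_injective (mul_left_cancel₀ hc.ne' h)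
  rw [← himage, integral_image_eq_integral_abs_deriv_smul MeasurableSet.univ hderiv hinj,
    setIntegral_univ]
  simp only [abs_of_pos (mul_pos hc (Real.exp_pos _))]

theorem Complex.ofReal_exp_cpow (t : ℝ) (s : ℂ) :
    ((Real.exp t : ℝ) : ℂ) ^ s = Complex.exp (t * s) := by
  rw [cpow_def_of_ne_zero (ofReal_ne_zero.mpr (Real.exp_pos t).ne'),
    ← ofReal_log (Real.exp_pos t).le, Real.log_exp]

theorem integral_Ioi_cpow_div_mul_exp (s : ℂ) {c : ℝ} (hc : 0 < c) (d : ℝ) :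
    ∫ v in Set.Ioi (0 : ℝ),
        ((c / v : ℝ) : ℂ) ^ s * Complex.exp (-(1 / 2 : ℂ) * ((v + c * d / v : ℝ) : ℂ)) / v =
      ∫ u : ℝ, Complex.exp (-s * u - (1 / 2 : ℂ) *
        ((c * Real.exp u + d * Real.exp (-u) : ℝ) : ℂ)) := by
  rw [← integral_comp_mul_exp _ hc]
  congr 1 with u
  have hv : c * Real.exp u ≠ 0 := (mul_pos hc (Real.exp_pos u)).ne'
  have hpow : c / (c * Real.exp u) = Real.exp (-u) := by
    rw [Real.exp_neg]; field_simp
  have hquot : c * d / (c * Real.exp u) = d * Real.exp (-u) := by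
    rw [Real.exp_neg]; field_simp
  rw [hpow, hquot, ofReal_exp_cpow, real_smul, mul_div_cancel₀ _ (ofReal_ne_zero.mpr hv),
    ← Complex.exp_add]
  push_cast
  ring_nf

theorem sq_add_sq_add_two_mul_mul_cosh (x y T : ℝ) :
    x ^ 2 + y ^ 2 + 2 * x * y * Real.cosh (2 * T) =
      (x * Real.exp T + y * Real.exp (-T)) * (y * Real.exp T + x * Real.exp (-T)) := by
  rw [Real.cosh_eq, Real.exp_neg, Real.exp_neg, show 2 * T = T + T by ring, Real.exp_add]
  field_simp
  ring

theorem mul_exp_add_mul_exp_neg_eq_cosh (x y T U : ℝ) :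
    (x * Real.exp T + y * Real.exp (-T)) * Real.exp U +
        (y * Real.exp T + x * Real.exp (-T)) * Real.exp (-U) =
      2 * (x * Real.cosh (T + U) + y * Real.cosh (T - U)) := by
  simp only [Real.cosh_eq, Real.exp_add, Real.exp_sub, Real.exp_neg]
  field_simp
  ring

/-- Substitution identity used in the product formula for two K-Bessel
functions of different orders: for `a b : ℂ`, `x, y > 0` and `T : ℝ`,
`∫_{-∞}^{∞} e^{-(a-b)U - x cosh(T+U) - y cosh(T-U)} dU
  = ∫₀^∞ ((x e^T + y e^{-T})/v)^{a-b} e^{-(1/2)(v + (x²+y²+2xy cosh 2T)/v)} dv/v`. -/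
theorem besselK_substitution (a b : ℂ) (x y : ℝ) (hx : 0 < x) (hy : 0 < y)
    (T : ℝ) :
    ∫ U : ℝ, Complex.exp (-(a - b) * (U : ℂ) -
        ((x * Real.cosh (T + U) : ℝ) : ℂ) - ((y * Real.cosh (T - U) : ℝ) : ℂ)) =
      ∫ v in Set.Ioi (0:ℝ),
        (((x * Real.exp T + y * Real.exp (-T)) / v : ℝ) : ℂ) ^ (a - b) *
          Complex.exp (-(1/2 : ℂ) *
            (((v + (x ^ 2 + y ^ 2 + 2 * x * y * Real.cosh (2 * T)) / v : ℝ)) : ℂ)) /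
          (v : ℂ) := by
  rw [sq_add_sq_add_two_mul_mul_cosh,
    integral_Ioi_cpow_div_mul_exp (a - b) (by positivity : 0 < x * Real.exp T + y * Real.exp (-T))]
  congr 1 with U
  rw [mul_exp_add_mul_exp_neg_eq_cosh]
  push_cast
  ring_nf
end

section
/- Let a and b be real numbers with a ≥ −1 and b ≤ 1. Then there exists a constant C > 0, depending only on a and b, such that for every real number t > 0 one has ∫_{−t/2}^{0} (1 + t/2 + v)^{a} · (1 − v)^{−b} dv ≤ C · (1 + t)^{a − b + 1} · log(1 + t). -/
open MeasureTheory

/-- Elementary integral estimate: for `a ≥ -1` and `b ≤ 1` there is `C > 0`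
such that for all `t > 0`,
`∫_{-t/2}^{0} (1+t/2+v)^a (1-v)^{-b} dv ≤ C (1+t)^{a-b+1} log(1+t)`. -/
theorem integral_estimate (a b : ℝ) (ha : -1 ≤ a) (hb : b ≤ 1) :
    ∃ C > 0, ∀ t : ℝ, 0 < t →
      (∫ v in Set.Ioo (-t/2) (0:ℝ), (1 + t/2 + v) ^ a * (1 - v) ^ (-b)) ≤
        C * (1 + t) ^ (a - b + 1) * Real.log (1 + t) := by
  refine ⟨4, by norm_num, fun t ht => ?_⟩
  have hle : -t/2 ≤ (0:ℝ) := by linarith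
  have h1t : (0:ℝ) < 1 + t := by linarith
  have h2t : (0:ℝ) < 1 + t/2 := by linarith
  -- turn the set integral into an interval integral
  rw [← MeasureTheory.integral_Ioc_eq_integral_Ioo, ← intervalIntegral.integral_of_le hle]
  -- positivity of the factors on the interval
  have hx1 : ∀ v ∈ Set.uIcc (-t/2) (0:ℝ), (1:ℝ) ≤ 1 + t/2 + v := by
    intro v hv
    rw [Set.uIcc_of_le hle] at hv
    have := hv.1; linarith
  have hy1 : ∀ v ∈ Set.uIcc (-t/2) (0:ℝ), (1:ℝ) ≤ 1 - v := by
    intro v hv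
    rw [Set.uIcc_of_le hle] at hv
    have := hv.2; linarith
  -- integrability of the integrand
  have hfc : ContinuousOn (fun v : ℝ => (1 + t/2 + v) ^ a * (1 - v) ^ (-b))
      (Set.uIcc (-t/2) (0:ℝ)) := by
    apply ContinuousOn.mul
    · apply ContinuousOn.rpow_const (by fun_prop)
      intro v hv; left; have := hx1 v hv; linarith
    · apply ContinuousOn.rpow_const (by fun_prop)
      intro v hv; left; have := hy1 v hv; linarith
  have hfi : IntervalIntegrable (fun v : ℝ => (1 + t/2 + v) ^ a * (1 - v) ^ (-b))
      volume (-t/2) 0 := hfc.intervalIntegrable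
  -- integrability of the majorant
  have hgc : ContinuousOn
      (fun v : ℝ => (1+t) ^ (a+1) * (1+t) ^ (1-b) * ((1 + t/2 + v)⁻¹ * (1 - v)⁻¹))
      (Set.uIcc (-t/2) (0:ℝ)) := by
    apply ContinuousOn.mul continuousOn_const
    apply ContinuousOn.mul
    · apply ContinuousOn.inv₀ (by fun_prop)
      intro v hv; have := hx1 v hv; linarith
    · apply ContinuousOn.inv₀ (by fun_prop)
      intro v hv; have := hy1 v hv; linarith
  have hgi : IntervalIntegrable
      (fun v : ℝ => (1+t) ^ (a+1) * (1+t) ^ (1-b) * ((1 + t/2 + v)⁻¹ * (1 - v)⁻¹))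
      volume (-t/2) 0 := hgc.intervalIntegrable
  -- pointwise bound
  have hmono : ∀ v ∈ Set.Icc (-t/2) (0:ℝ),
      (1 + t/2 + v) ^ a * (1 - v) ^ (-b) ≤
        (1+t) ^ (a+1) * (1+t) ^ (1-b) * ((1 + t/2 + v)⁻¹ * (1 - v)⁻¹) := by
    intro v hv
    have hx : (1:ℝ) ≤ 1 + t/2 + v := by have := hv.1; linarith
    have hy : (1:ℝ) ≤ 1 - v := by have := hv.2; linarith
    have hxt : 1 + t/2 + v ≤ 1 + t := by have := hv.2; linarith
    have hyt : 1 - v ≤ 1 + t := by have := hv.1; linarith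
    have hx0 : (0:ℝ) < 1 + t/2 + v := by linarith
    have hy0 : (0:ℝ) < 1 - v := by linarith
    have e1 : (1 + t/2 + v) ^ a = (1 + t/2 + v) ^ (a+1) * (1 + t/2 + v)⁻¹ := by
      rw [← Real.rpow_neg_one, ← Real.rpow_add hx0]; norm_num
    have e2 : (1 - v) ^ (-b) = (1 - v) ^ (1-b) * (1 - v)⁻¹ := by
      rw [← Real.rpow_neg_one, ← Real.rpow_add hy0]; congr 1; ring
    rw [e1, e2]
    calc (1 + t/2 + v) ^ (a+1) * (1 + t/2 + v)⁻¹ * ((1 - v) ^ (1-b) * (1 - v)⁻¹)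
        = (1 + t/2 + v) ^ (a+1) * (1 - v) ^ (1-b) * ((1 + t/2 + v)⁻¹ * (1 - v)⁻¹) := by
          ring
      _ ≤ (1+t) ^ (a+1) * (1+t) ^ (1-b) * ((1 + t/2 + v)⁻¹ * (1 - v)⁻¹) := by
          have h1 : (1 + t/2 + v) ^ (a+1) ≤ (1+t) ^ (a+1) :=
            Real.rpow_le_rpow (by linarith) hxt (by linarith)
          have h2 : (1 - v) ^ (1-b) ≤ (1+t) ^ (1-b) :=
            Real.rpow_le_rpow (by linarith) hyt (by linarith)
          have hp1 : (0:ℝ) ≤ (1 + t/2 + v) ^ (a+1) := Real.rpow_nonneg (by linarith) _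
          have hp2 : (0:ℝ) ≤ (1+t) ^ (a+1) := Real.rpow_nonneg (by linarith) _
          have hp3 : (0:ℝ) ≤ (1 - v) ^ (1-b) := Real.rpow_nonneg (by linarith) _
          have hinv : (0:ℝ) ≤ (1 + t/2 + v)⁻¹ * (1 - v)⁻¹ := by positivity
          exact mul_le_mul (mul_le_mul h1 h2 hp3 hp2) le_rfl hinv (by positivity)
  refine (intervalIntegral.integral_mono_on hle hfi hgi hmono).trans ?_
  -- compute the integral of the majorant
  have hi1 : (∫ v in (-t/2)..0, (1 + t/2 + v)⁻¹) = Real.log (1 + t/2) := by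
    rw [intervalIntegral.integral_comp_add_left (fun x : ℝ => x⁻¹) (1 + t/2),
      show (1 + t/2) + (-t/2) = (1:ℝ) by ring, add_zero,
      integral_inv (by
        rw [Set.uIcc_of_le (by linarith : (1:ℝ) ≤ 1 + t/2)]
        rintro ⟨h0, -⟩; linarith), div_one]
  have hi2 : (∫ v in (-t/2)..0, (1 - v)⁻¹) = Real.log (1 + t/2) := by
    rw [intervalIntegral.integral_comp_sub_left (fun x : ℝ => x⁻¹) 1,
      show (1:ℝ) - 0 = 1 by ring, show (1:ℝ) - (-t/2) = 1 + t/2 by ring,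
      integral_inv (by
        rw [Set.uIcc_of_le (by linarith : (1:ℝ) ≤ 1 + t/2)]
        rintro ⟨h0, -⟩; linarith), div_one]
  have hii1 : IntervalIntegrable (fun v : ℝ => (1 + t/2 + v)⁻¹) volume (-t/2) 0 := by
    apply ContinuousOn.intervalIntegrable
    apply ContinuousOn.inv₀ (by fun_prop)
    intro v hv; have := hx1 v hv; linarith
  have hii2 : IntervalIntegrable (fun v : ℝ => (1 - v)⁻¹) volume (-t/2) 0 := by
    apply ContinuousOn.intervalIntegrable
    apply ContinuousOn.inv₀ (by fun_prop)
    intro v hv; have := hy1 v hv; linarith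
  have hcongr : (∫ v in (-t/2)..0, (1 + t/2 + v)⁻¹ * (1 - v)⁻¹)
      = ∫ v in (-t/2)..0, (2 + t/2)⁻¹ * ((1 + t/2 + v)⁻¹ + (1 - v)⁻¹) := by
    apply intervalIntegral.integral_congr
    intro v hv
    dsimp only
    have hx := hx1 v hv
    have hy := hy1 v hv
    have hx0 : (1 + t/2 + v) ≠ 0 := by linarith
    have hy0 : (1 - v) ≠ 0 := by linarith
    have hs : (2 + t/2 : ℝ) ≠ 0 := by linarith
    have hsum : (1 + t/2 + v)⁻¹ + (1 - v)⁻¹ = (2 + t/2) * ((1 + t/2 + v)⁻¹ * (1 - v)⁻¹) := by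
      rw [inv_add_inv hx0 hy0, show (1 + t/2 + v) + (1 - v) = 2 + t/2 by ring,
        div_eq_mul_inv, mul_inv]
    rw [hsum, ← mul_assoc, inv_mul_cancel₀ hs, one_mul]
  have hint : (∫ v in (-t/2)..0,
      (1+t) ^ (a+1) * (1+t) ^ (1-b) * ((1 + t/2 + v)⁻¹ * (1 - v)⁻¹))
      = (1+t) ^ (a+1) * (1+t) ^ (1-b) * ((2 + t/2)⁻¹ * (2 * Real.log (1 + t/2))) := by
    rw [intervalIntegral.integral_const_mul, hcongr,
      intervalIntegral.integral_const_mul,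
      intervalIntegral.integral_add hii1 hii2, hi1, hi2]
    ring
  rw [hint]
  -- final arithmetic
  have hK : (1+t) ^ (a+1) * (1+t) ^ (1-b) = (1+t) ^ (a-b+1) * (1+t) := by
    rw [← Real.rpow_add h1t, show (a+1) + (1-b) = (a-b+1) + 1 by ring,
      Real.rpow_add h1t, Real.rpow_one]
  rw [hK]
  have hlog : Real.log (1 + t/2) ≤ Real.log (1 + t) := Real.log_le_log h2t (by linarith)
  have hlog0 : (0:ℝ) ≤ Real.log (1 + t/2) := Real.log_nonneg (by linarith)
  have hlog0' : (0:ℝ) ≤ Real.log (1 + t) := Real.log_nonneg (by linarith)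
  have hKpos : (0:ℝ) ≤ (1+t) ^ (a-b+1) := Real.rpow_nonneg (by linarith) _
  have key : (1+t) * ((2 + t/2)⁻¹ * (2 * Real.log (1 + t/2))) ≤ 4 * Real.log (1+t) := by
    have h1 : (1+t) * (2 + t/2)⁻¹ ≤ 2 := by
      rw [← div_eq_mul_inv, div_le_iff₀ (by linarith)]
      linarith
    calc (1+t) * ((2 + t/2)⁻¹ * (2 * Real.log (1 + t/2)))
        = ((1+t) * (2 + t/2)⁻¹) * (2 * Real.log (1 + t/2)) := by ring
      _ ≤ 2 * (2 * Real.log (1 + t)) := by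
          apply mul_le_mul h1 (by linarith) (by linarith)
          norm_num
      _ = 4 * Real.log (1+t) := by ring
  calc (1+t) ^ (a-b+1) * (1+t) * ((2 + t/2)⁻¹ * (2 * Real.log (1 + t/2)))
      = (1+t) ^ (a-b+1) * ((1+t) * ((2 + t/2)⁻¹ * (2 * Real.log (1 + t/2)))) := by ring
    _ ≤ (1+t) ^ (a-b+1) * (4 * Real.log (1+t)) := by
        exact mul_le_mul_of_nonneg_left key hKpos
    _ = 4 * (1+t) ^ (a-b+1) * Real.log (1+t) := by ring
end

section
/- Let σ be a real number with 0 < σ ≤ 1. Then there exists a constant C > 0 (depending only on σ) such that for every real number t ≥ 1 one has ∫_{t+1}^{∞} e^{−2π u} · u^{2σ − 2} · (u − t)^{2σ − 2} · log(u) du ≤ C · e^{−2π t} · (1 + t)^{2σ − 2} · log(1 + t). -/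
/-!
On `(t + 1, ∞)` the factors `u ^ (2σ - 2)` and `(u - t) ^ (2σ - 2)` are at most `(1 + t) ^ (2σ - 2)`
and `1`, while `log u ≤ log ((u - t) (1 + t)) ≤ 3 (u - t) log (1 + t)`. The extra factor `u - t` is
absorbed by the exponential, `(u - t) e^{-2π(u - t)} ≤ e^{-(u - t)}`, and `∫_{t+1}^∞ e^{-(u - t)} du`
is `e^{-1} ≤ 1`.
-/

open MeasureTheory Set Real

lemma Real.log_add_le_mul_log {t v : ℝ} (ht : 1 ≤ t) (hv : 1 ≤ v) :
    log (t + v) ≤ 3 * v * log (1 + t) := by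
  have hlog2 : 1 / 2 ≤ log (1 + t) :=
    le_trans (by linarith [log_two_gt_d9]) (log_le_log two_pos (by linarith))
  have hsplit : log (t + v) ≤ log (1 + t) + log v := by
    rw [← log_mul (by linarith) (by linarith)]
    exact log_le_log (by linarith) (by nlinarith)
  nlinarith [log_le_self (x := v) (by linarith)]

lemma Real.mul_exp_neg_mul_le_exp_neg {c v : ℝ} (hc : 2 ≤ c) (hv : 0 ≤ v) :
    v * exp (-(c * v)) ≤ exp (-v) :=
  calc v * exp (-(c * v)) ≤ exp v * exp (-(c * v)) :=
        mul_le_mul_of_nonneg_right (by linarith [add_one_le_exp v]) (exp_pos _).le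
    _ = exp ((1 - c) * v) := by rw [← exp_add]; ring_nf
    _ ≤ exp (-v) := exp_le_exp.2 (by nlinarith)

lemma setIntegral_Ioi_le_of_le_exp_neg_sub {f : ℝ → ℝ} {a b B : ℝ}
    (hf : ∀ u ∈ Ioi a, 0 ≤ f u) (hle : ∀ u ∈ Ioi a, f u ≤ B * exp (-(u - b))) :
    ∫ u in Ioi a, f u ≤ B * exp (-(a - b)) := by
  have hexp : ∀ u, B * exp (-(u - b)) = B * exp b * exp (-u) := fun u => by
    rw [mul_assoc, ← exp_add, neg_sub, sub_eq_add_neg]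
  simp only [hexp] at hle ⊢
  calc ∫ u in Ioi a, f u ≤ ∫ u in Ioi a, B * exp b * exp (-u) :=
        setIntegral_mono_of_nonneg hf hle ((integrableOn_exp_neg_Ioi a).const_mul _)
    _ = B * exp b * exp (-a) := by rw [integral_const_mul, integral_exp_neg_Ioi]

section Integrand

variable {c p t u : ℝ}

lemma integrand_nonneg (ht : 0 ≤ t) (hu : t + 1 < u) :
    0 ≤ exp (-(c * u)) * u ^ p * (u - t) ^ p * log u := by
  have := rpow_nonneg (x := u) (by linarith) p
  have := rpow_nonneg (x := u - t) (by linarith) p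
  have := log_nonneg (x := u) (by linarith)
  positivity

lemma integrand_le_exp_neg_sub (hc : 2 ≤ c) (hp : p ≤ 0) (ht : 1 ≤ t) (hu : t + 1 < u) :
    exp (-(c * u)) * u ^ p * (u - t) ^ p * log u ≤
      3 * exp (-(c * t)) * (1 + t) ^ p * log (1 + t) * exp (-(u - t)) := by
  have hpow : u ^ p * (u - t) ^ p ≤ (1 + t) ^ p * 1 :=
    mul_le_mul (rpow_le_rpow_of_nonpos (by linarith) (by linarith) hp)
      (rpow_le_one_of_one_le_of_nonpos (by linarith) hp)
      (rpow_nonneg (by linarith) p) (rpow_nonneg (by linarith) p)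
  have hlog : log u ≤ 3 * (u - t) * log (1 + t) := by
    simpa using log_add_le_mul_log ht (v := u - t) (by linarith)
  have hdecay := mul_exp_neg_mul_le_exp_neg hc (v := u - t) (by linarith)
  have hsplit : exp (-(c * u)) = exp (-(c * t)) * exp (-(c * (u - t))) := by
    rw [← exp_add]; ring_nf
  have := rpow_nonneg (x := 1 + t) (by linarith) p
  have := log_nonneg (x := 1 + t) (by linarith)
  calc exp (-(c * u)) * u ^ p * (u - t) ^ p * log u
      = exp (-(c * u)) * (u ^ p * (u - t) ^ p) * log u := by ring
    _ ≤ exp (-(c * u)) * ((1 + t) ^ p * 1) * (3 * (u - t) * log (1 + t)) := by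
        gcongr
        exact log_nonneg (by linarith)
    _ = 3 * exp (-(c * t)) * (1 + t) ^ p * log (1 + t) * ((u - t) * exp (-(c * (u - t)))) := by
        rw [hsplit]; ring
    _ ≤ 3 * exp (-(c * t)) * (1 + t) ^ p * log (1 + t) * exp (-(u - t)) := by
        gcongr

end Integrand

theorem continuous_spectrum_tail_general (σ : ℝ) (hσ1 : σ ≤ 1) :
    ∃ C > 0, ∀ t : ℝ, 1 ≤ t →
      (∫ u in Set.Ioi (t + 1),
          Real.exp (-(2 * Real.pi * u)) * u ^ (2*σ - 2) * (u - t) ^ (2*σ - 2) *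
            Real.log u) ≤
        C * Real.exp (-(2 * Real.pi * t)) * (1 + t) ^ (2*σ - 2) *
          Real.log (1 + t) := by
  refine ⟨3, by norm_num, fun t ht => ?_⟩
  have hc : 2 ≤ 2 * π := by linarith [pi_gt_three]
  have hp : 2 * σ - 2 ≤ 0 := by linarith
  have hA : 0 ≤ 3 * exp (-(2 * π * t)) * (1 + t) ^ (2 * σ - 2) * log (1 + t) := by
    have := rpow_nonneg (x := 1 + t) (by linarith) (2 * σ - 2)
    have := log_nonneg (x := 1 + t) (by linarith)
    positivity
  calc _ ≤ 3 * exp (-(2 * π * t)) * (1 + t) ^ (2 * σ - 2) * log (1 + t) * exp (-(t + 1 - t)) :=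
        setIntegral_Ioi_le_of_le_exp_neg_sub (fun u hu => integrand_nonneg (by linarith) hu)
          (fun u hu => integrand_le_exp_neg_sub hc hp ht hu)
    _ ≤ _ := mul_le_of_le_one_right hA (exp_le_one_iff.2 (by linarith))

/-- Continuous-spectrum tail estimate: for `0 < σ ≤ 1` there is `C > 0` such
that for all `t ≥ 1`,
`∫_{t+1}^∞ e^{-2πu} u^{2σ-2} (u-t)^{2σ-2} log u du
  ≤ C e^{-2πt} (1+t)^{2σ-2} log(1+t)`. -/
theorem continuous_spectrum_tail (σ : ℝ) (hσ0 : 0 < σ) (hσ1 : σ ≤ 1) :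
    ∃ C > 0, ∀ t : ℝ, 1 ≤ t →
      (∫ u in Set.Ioi (t + 1),
          Real.exp (-(2 * Real.pi * u)) * u ^ (2*σ - 2) * (u - t) ^ (2*σ - 2) *
            Real.log u) ≤
        C * Real.exp (-(2 * Real.pi * t)) * (1 + t) ^ (2*σ - 2) *
          Real.log (1 + t) :=
  continuous_spectrum_tail_general σ hσ1
end
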